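/- arXiv:math/0011092 — 3 statements merged into one kernel-verified Lean document; each statement's English description precedes it below -/
import Mathlib

section
/- Let G = (V,E) be a finite connected graph. For every 0 < x ≤ 1/2, the minimum in the definition of the size-restricted Cheeger constant φ(x) = min{ φ_A : 0 < π(A) ≤ x } is attained at a set A that is connected in G. Moreover, the minimum in the definition of the Cheeger constant φ = inf{ φ_A : 0 < π(A) ≤ 1/2 } is attained at a set A such that both A and its complement V \ A are connected in G. -/
open MeasureTheory Filter
open scoped ENNReal Classical

noncomputable section

/-- Vertices of `ℤ^d`. -/
abbrev Vert (d : ℕ) := Fin d → ℤ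

/-- (Oriented) edges of `ℤ^d`: `(v, i)` is the edge from `v` to `v + eᵢ`. -/
abbrev EdgeZ (d : ℕ) := Vert d × Fin d

def unitVec (d : ℕ) (i : Fin d) : Vert d := fun j => if j = i then 1 else 0

/-- Second endpoint of an edge. -/
def edgeSnd {d : ℕ} (e : EdgeZ d) : Vert d := e.1 + unitVec d e.2

/-- The box `{-n, …, n}^d`. -/
def boxFinset (d n : ℕ) : Finset (Vert d) :=
  Fintype.piFinset fun _ => Finset.Icc (-(n : ℤ)) (n : ℤ)

/-- The edges of the box `B_d(n)`. -/
def boxEdgeFinset (d n : ℕ) : Finset (EdgeZ d) :=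
  (boxFinset d n ×ˢ (Finset.univ : Finset (Fin d))).filter fun e => edgeSnd e ∈ boxFinset d n

/-- ℓ¹ distance on `ℤ^d`. -/
def l1dist {d : ℕ} (v w : Vert d) : ℤ := ∑ i, |v i - w i|

/-- Lattice adjacency: ℓ¹ distance one. -/
def latAdj {d : ℕ} (v w : Vert d) : Prop := l1dist v w = 1

/-- Bernoulli(p) measure on `Bool`. -/
def bern (p : ℝ) : Measure Bool :=
  (PMF.bernoulli (min (Real.toNNReal p) 1) (min_le_right _ _)).toMeasure

instance (p : ℝ) : IsProbabilityMeasure (bern p) := by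
  unfold bern; infer_instance

/-- Bernoulli bond percolation on the box `B_d(n)`: the edges of the box are
open independently with probability `p`; edges outside the box are closed. -/
def bondMeasure (d n : ℕ) (p : ℝ) : Measure (EdgeZ d → Bool) :=
  (Measure.pi fun _ : {e // e ∈ boxEdgeFinset d n} => bern p).map
    fun ω e => if h : e ∈ boxEdgeFinset d n then ω ⟨e, h⟩ else false

/-- Bernoulli site percolation on the box `B_d(n)`. -/
def siteMeasure (d n : ℕ) (p : ℝ) : Measure (Vert d → Bool) :=
  (Measure.pi fun _ : {v // v ∈ boxFinset d n} => bern p).map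
    fun η v => if h : v ∈ boxFinset d n then η ⟨v, h⟩ else false

/-- Two vertices joined by an open edge of the box `B_d(n)`. -/
def openAdj (d n : ℕ) (ω : EdgeZ d → Bool) (v w : Vert d) : Prop :=
  ∃ e ∈ boxEdgeFinset d n, ω e = true ∧
    ((e.1 = v ∧ edgeSnd e = w) ∨ (e.1 = w ∧ edgeSnd e = v))

/-- Connectivity by open edges inside the box. -/
def openConn (d n : ℕ) (ω : EdgeZ d → Bool) : Vert d → Vert d → Prop :=
  Relation.ReflTransGen (openAdj d n ω)

/-- The open cluster of `v` inside the box `B_d(n)`. -/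
def cluster (d n : ℕ) (ω : EdgeZ d → Bool) (v : Vert d) : Finset (Vert d) :=
  (boxFinset d n).filter fun w => openConn d n ω v w

/-- Number of open edges with both endpoints in `C`. -/
def openEdgeCount (d n : ℕ) (ω : EdgeZ d → Bool) (C : Finset (Vert d)) : ℕ :=
  ((boxEdgeFinset d n).filter fun e => ω e = true ∧ e.1 ∈ C ∧ edgeSnd e ∈ C).card

def IsCluster (d n : ℕ) (ω : EdgeZ d → Bool) (C : Finset (Vert d)) : Prop :=
  ∃ v ∈ boxFinset d n, C = cluster d n ω v

/-- `C` is an open cluster of `B_d(n)` with the maximal number of open edges,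
i.e. `C = 𝒞_d(n)`. -/
def IsLargestCluster (d n : ℕ) (ω : EdgeZ d → Bool) (C : Finset (Vert d)) : Prop :=
  IsCluster d n ω C ∧
    ∀ C', IsCluster d n ω C' → openEdgeCount d n ω C' ≤ openEdgeCount d n ω C

/-- Number of open edges with one endpoint in `A` and the other in `B`. -/
def openEdgesBetween (d n : ℕ) (ω : EdgeZ d → Bool) (A B : Finset (Vert d)) : ℕ :=
  ((boxEdgeFinset d n).filter fun e => ω e = true ∧
    ((e.1 ∈ A ∧ edgeSnd e ∈ B) ∨ (e.1 ∈ B ∧ edgeSnd e ∈ A))).card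

section WalkDefs

variable {V : Type*} [DecidableEq V]

/-- Degree of `x` in the graph with vertex set `C` and adjacency relation `R`. -/
def rDeg (R : V → V → Prop) (C : Finset V) (x : V) : ℕ := (C.filter fun w => R x w).card

/-- Sum of the degrees (twice the number of edges). -/
def rTotal (R : V → V → Prop) (C : Finset V) : ℕ := ∑ x ∈ C, rDeg R C x

/-- Stationary probability of the set `A` for simple random walk: `π(A) = Σ_{x∈A} deg x / Σ_y deg y`. -/
def piSet (R : V → V → Prop) (C A : Finset V) : ℝ :=
  (∑ x ∈ A, (rDeg R C x : ℝ)) / (rTotal R C : ℝ)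

/-- Stationary probability of a vertex: `π(x) = deg x / Σ_y deg y`. -/
def piVert (R : V → V → Prop) (C : Finset V) (x : V) : ℝ :=
  (rDeg R C x : ℝ) / (rTotal R C : ℝ)

/-- `Q(A,B)`: the number of edges from `A` to `B`, each with weight `1/Σ_y deg y`. -/
def qBetween (R : V → V → Prop) (C A B : Finset V) : ℝ :=
  (∑ a ∈ A, ((B.filter fun b => R a b).card : ℝ)) / (rTotal R C : ℝ)

/-- Conductance `φ_A = Q(A, Aᶜ) / (π(A) π(Aᶜ))` of a set `A` in the graph `(C, R)`. -/
def conductance (R : V → V → Prop) (C A : Finset V) : ℝ :=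
  qBetween R C A (C \ A) / (piSet R C A * piSet R C (C \ A))

/-- The Cheeger constant `φ = inf {φ_A : 0 < π(A) ≤ 1/2}`. -/
def cheeger (R : V → V → Prop) (C : Finset V) : ℝ :=
  sInf {r : ℝ | ∃ A : Finset V, A ⊆ C ∧ 0 < piSet R C A ∧ piSet R C A ≤ 1 / 2 ∧
    r = conductance R C A}

/-- The size-restricted Cheeger constant `φ(x) = min {φ_A : 0 < π(A) ≤ x}`. -/
def cheegerAt (R : V → V → Prop) (C : Finset V) (x : ℝ) : ℝ :=
  sInf {r : ℝ | ∃ A : Finset V, A ⊆ C ∧ 0 < piSet R C A ∧ piSet R C A ≤ x ∧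
    r = conductance R C A}

/-- A finite set `S` is connected for the relation `R` (within `S`). -/
def ConnectedOn (R : V → V → Prop) (S : Finset V) : Prop :=
  S.Nonempty ∧ ∀ v ∈ S, ∀ w ∈ S,
    Relation.ReflTransGen (fun a b => a ∈ S ∧ b ∈ S ∧ R a b) v w

/-- The generator `Q` of continuous-time simple random walk on the graph `(C, R)`:
`Q_{xy} = 1/deg x` if `x ~ y`, `Q_{xx} = -1`, and `0` otherwise. -/
def walkGen (R : V → V → Prop) (C : Finset V) : Matrix {y // y ∈ C} {y // y ∈ C} ℝ :=
  Matrix.of fun x y =>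
    if (x : V) = (y : V) then -1
    else if R (x : V) (y : V) then ((rDeg R C (x : V) : ℝ))⁻¹ else 0

end WalkDefs

/-- The heat kernel `π^t_x(y) = (exp (t Q))_{x y}` of the continuous-time walk. -/
def heatKernel {W : Type*} [Fintype W] [DecidableEq W] (Q : Matrix W W ℝ) (t : ℝ)
    (x y : W) : ℝ :=
  ∑' k : ℕ, (t ^ k / (Nat.factorial k : ℝ)) * (Q ^ k) x y

/-- Total variation distance between two (densities of) measures on `W`. -/
def tvDist {W : Type*} [Fintype W] (f g : W → ℝ) : ℝ := (∑ x, |f x - g x|) / 2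

/-- The total-variation mixing time
`τ₁ = inf {t : sup_{x,y} d_V(π^t_x, π^t_y) ≤ e⁻¹}`. -/
def mixTime {W : Type*} [Fintype W] [DecidableEq W] (Q : Matrix W W ℝ) : ℝ :=
  sInf {t : ℝ | 0 ≤ t ∧
    ∀ x y : W, tvDist (heatKernel Q t x) (heatKernel Q t y) ≤ Real.exp (-1)}

/-- The second eigenvalue `λ₂ < 0` of the generator `Q`. -/
def lambda2 {W : Type*} [Fintype W] [DecidableEq W] (Q : Matrix W W ℝ) : ℝ :=
  sSup {l : ℝ | l < 0 ∧ Module.End.HasEigenvalue (Matrix.toLin' Q) l}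

/-- The relaxation time `τ₂ = -1/λ₂`. -/
def relaxTime {W : Type*} [Fintype W] [DecidableEq W] (Q : Matrix W W ℝ) : ℝ :=
  -(lambda2 Q)⁻¹

/-- Mixing time of the simple random walk on a cluster `C` of bond percolation on `B_d(n)`. -/
def clusterMixTime (d n : ℕ) (ω : EdgeZ d → Bool) (C : Finset (Vert d)) : ℝ :=
  mixTime (walkGen (openAdj d n ω) C)

/-- The event that the origin is connected to the boundary of the box `B_d(n)` by an
open path (inside the box). -/
def crossEvent (d n : ℕ) : Set (EdgeZ d → Bool) :=
  {ω | ∃ w ∈ boxFinset d n, (∃ i, |w i| = (n : ℤ)) ∧ openConn d n ω 0 w}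

/-- `θ(p)`, the probability that the origin percolates: the decreasing limit of the
probabilities of crossing the box `B_d(n)`. -/
def theta (d : ℕ) (p : ℝ) : ℝ≥0∞ := ⨅ n : ℕ, bondMeasure d n p (crossEvent d n)

/-- The critical parameter `p_c(ℤ^d)` for Bernoulli bond percolation. -/
def pc (d : ℕ) : ℝ := sSup {p : ℝ | 0 ≤ p ∧ p ≤ 1 ∧ theta d p = 0}

/-- `μ` is Bernoulli(p) bond percolation on all of `ℤ^d`: the cylinder events have the
right probabilities. -/
def IsBernoulliPerc (d : ℕ) (p : ℝ) (μ : Measure (EdgeZ d → Bool)) : Prop :=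
  IsProbabilityMeasure μ ∧
    ∀ (s : Finset (EdgeZ d)) (f : EdgeZ d → Bool),
      μ {ω | ∀ e ∈ s, ω e = f e} =
        ∏ e ∈ s, (if f e then ENNReal.ofReal p else ENNReal.ofReal (1 - p))

/-- Adjacency by an open edge, anywhere in `ℤ^d`. -/
def fullOpenAdj (d : ℕ) (ω : EdgeZ d → Bool) (v w : Vert d) : Prop :=
  ∃ e : EdgeZ d, ω e = true ∧ ((e.1 = v ∧ edgeSnd e = w) ∨ (e.1 = w ∧ edgeSnd e = v))

/-- The open cluster of `v` in the full lattice `ℤ^d`. -/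
def fullCluster (d : ℕ) (ω : EdgeZ d → Bool) (v : Vert d) : Set (Vert d) :=
  {w | Relation.ReflTransGen (fullOpenAdj d ω) v w}

/-- Connectivity in `B_d(n)` avoiding the edges of `B`. -/
def avoidConn (d n : ℕ) (B : Finset (EdgeZ d)) : Vert d → Vert d → Prop :=
  Relation.ReflTransGen fun a b => ∃ e ∈ boxEdgeFinset d n, e ∉ B ∧
    ((e.1 = a ∧ edgeSnd e = b) ∨ (e.1 = b ∧ edgeSnd e = a))

/-- `B` is a cutset of edges separating `v` from `w` in `B_d(n)`:
every path from `v` to `w` in `B_d(n)` uses an edge of `B`. -/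
def IsCutset (d n : ℕ) (v w : Vert d) (B : Finset (EdgeZ d)) : Prop :=
  B ⊆ boxEdgeFinset d n ∧ ¬ avoidConn d n B v w

/-- A minimal cutset separating `v` from `w`. -/
def IsMinimalCutset (d n : ℕ) (v w : Vert d) (B : Finset (EdgeZ d)) : Prop :=
  IsCutset d n v w B ∧ ∀ B' ⊂ B, ¬ IsCutset d n v w B'

/-- Adjacency of open sites of site percolation in the box. -/
def siteAdj (d n : ℕ) (η : Vert d → Bool) (a b : Vert d) : Prop :=
  a ∈ boxFinset d n ∧ b ∈ boxFinset d n ∧ η a = true ∧ η b = true ∧ latAdj a b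

/-- The open cluster of `v` for site percolation on `B_d(n)`. -/
def siteCluster (d n : ℕ) (η : Vert d → Bool) (v : Vert d) : Finset (Vert d) :=
  (boxFinset d n).filter fun w => Relation.ReflTransGen (siteAdj d n η) v w

/-- Number of lattice edges of the box with both endpoints in `C`. -/
def siteEdgeCount (d n : ℕ) (C : Finset (Vert d)) : ℕ :=
  ((boxEdgeFinset d n).filter fun e => e.1 ∈ C ∧ edgeSnd e ∈ C).card

def IsSiteCluster (d n : ℕ) (η : Vert d → Bool) (C : Finset (Vert d)) : Prop :=
  ∃ v ∈ boxFinset d n, η v = true ∧ C = siteCluster d n η v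

def IsLargestSiteCluster (d n : ℕ) (η : Vert d → Bool) (C : Finset (Vert d)) : Prop :=
  IsSiteCluster d n η C ∧
    ∀ C', IsSiteCluster d n η C' → siteEdgeCount d n C' ≤ siteEdgeCount d n C

/-- The primal edge of `ℤ²` crossing a given edge of the dual lattice `ℤ²_* = ℤ² + (1/2,1/2)`
(dual vertices are identified with `ℤ²` via `u ↦ u + (1/2,1/2)`). -/
def primalOfDual (f : EdgeZ 2) : EdgeZ 2 :=
  if f.2 = (0 : Fin 2) then (![f.1 0 + 1, f.1 1], 1) else (![f.1 0, f.1 1 + 1], 0)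

/-- First-passage weight of the dual edge between the dual vertices `a` and `b`:
`1` if the primal edge crossing it is open, `0` if it is closed. -/
def dualStepWeight (ω : EdgeZ 2 → Bool) (a b : Vert 2) : ℕ :=
  if (∃ i : Fin 2, b = a + unitVec 2 i ∧ ω (primalOfDual (a, i)) = true) ∨
     (∃ i : Fin 2, a = b + unitVec 2 i ∧ ω (primalOfDual (b, i)) = true) then 1 else 0

/-- Total first-passage cost of a dual lattice path, given as the list of its vertices. -/
def pathCost (ω : EdgeZ 2 → Bool) (l : List (Vert 2)) : ℕ :=
  ((l.zip l.tail).map fun q => dualStepWeight ω q.1 q.2).sum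

/-- `l` is a lattice path from `x` to `y`. -/
def IsLatticePath (l : List (Vert 2)) (x y : Vert 2) : Prop :=
  l.Chain' latAdj ∧ l.head? = some x ∧ l.getLast? = some y

/-- First-passage percolation distance on the dual lattice:
`D(x,y) = min { Σᵢ X(eᵢ*) : e₁*,…,e_k* a dual path from x to y }`. -/
def fppDist (ω : EdgeZ 2 → Bool) (x y : Vert 2) : ℕ :=
  sInf {m : ℕ | ∃ l : List (Vert 2), IsLatticePath l x y ∧ pathCost ω l = m}

end

/-! Both minima are over finitely many sets, so they are attained. If no edge joins `D₁` and
`D₂`, then `min (φ D₁) (φ D₂) ≤ φ (D₁ ∪ D₂)`: the boundary edges of `D₁ ∪ D₂` are those of `D₁`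
plus those of `D₂`, while `π(D₁)π(D₁ᶜ) + π(D₂)π(D₂ᶜ) ≥ π(D₁ ∪ D₂)π((D₁ ∪ D₂)ᶜ)`. Hence among the
minimizers one of least cardinality is connected. Starting from a connected minimizer `A`: if
`Aᶜ = D₁ ∪ D₂` splits with `φ D₁ ≤ φ Aᶜ = φ A`, then `D₁ᶜ = A ∪ D₂` is connected, because every
vertex of `D₂` reaches `A` without entering `D₁`, and it is a minimizer with a smaller complement.
At the end both `A` and `Aᶜ` are connected, and as `φ Aᶜ = φ A` one of them has `π ≤ 1/2`. -/

/-- The denominators on the left add up to `(d₁ + d₂) a + 2 d₁ d₂`, so the right side dominates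
the mediant of the two fractions on the left. -/
theorem div_le_or_div_le_of_split {a d₁ d₂ e₁ e₂ : ℝ} (ha : 0 < a) (hd₁ : 0 < d₁) (hd₂ : 0 < d₂)
    (he₁ : 0 ≤ e₁) (he₂ : 0 ≤ e₂) :
    e₁ / (d₁ * (a + d₂)) ≤ (e₁ + e₂) / ((d₁ + d₂) * a) ∨
      e₂ / (d₂ * (a + d₁)) ≤ (e₁ + e₂) / ((d₁ + d₂) * a) := by
  by_contra! h
  obtain ⟨h₁, h₂⟩ := h
  set p := (e₁ + e₂) / ((d₁ + d₂) * a)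
  have hp₀ : 0 ≤ p := by positivity
  have hp : p * ((d₁ + d₂) * a) = e₁ + e₂ := div_mul_cancel₀ _ (by positivity)
  have k₁ : p * (d₁ * (a + d₂)) < e₁ := (lt_div_iff₀ (by positivity)).1 h₁
  have k₂ : p * (d₂ * (a + d₁)) < e₂ := (lt_div_iff₀ (by positivity)).1 h₂
  nlinarith [mul_nonneg (mul_nonneg hp₀ hd₁.le) hd₂.le]

namespace SimpleGraph

open Finset

variable {V : Type*} (G : SimpleGraph V)

noncomputable def crossEdges (A B : Finset V) : ℝ :=
  ∑ a ∈ A, ∑ b ∈ B, if G.Adj a b then (1 : ℝ) else 0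

theorem crossEdges_nonneg (A B : Finset V) : 0 ≤ G.crossEdges A B :=
  sum_nonneg fun _ _ => sum_nonneg fun _ _ => by positivity

theorem crossEdges_comm (A B : Finset V) : G.crossEdges A B = G.crossEdges B A := by
  rw [crossEdges, sum_comm]
  simp only [crossEdges, G.adj_comm]

theorem crossEdges_eq_zero {A B : Finset V} (h : ∀ a ∈ A, ∀ b ∈ B, ¬G.Adj a b) :
    G.crossEdges A B = 0 :=
  sum_eq_zero fun a ha => sum_eq_zero fun b hb => if_neg (h a ha b hb)

theorem crossEdges_union_left [DecidableEq V] {A B : Finset V} (h : Disjoint A B)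
    (C : Finset V) : G.crossEdges (A ∪ B) C = G.crossEdges A C + G.crossEdges B C :=
  sum_union h

theorem crossEdges_union_right [DecidableEq V] (A : Finset V) {B C : Finset V}
    (h : Disjoint B C) : G.crossEdges A (B ∪ C) = G.crossEdges A B + G.crossEdges A C := by
  simp only [crossEdges, sum_union h, sum_add_distrib]

theorem reflTransGen_induced_symm {S : Finset V} {u v : V}
    (h : Relation.ReflTransGen (fun a b => a ∈ S ∧ b ∈ S ∧ G.Adj a b) u v) :
    Relation.ReflTransGen (fun a b => a ∈ S ∧ b ∈ S ∧ G.Adj a b) v u :=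
  haveI : Std.Symm fun a b => a ∈ S ∧ b ∈ S ∧ G.Adj a b :=
    ⟨fun _ _ ⟨ha, hb, hab⟩ => ⟨hb, ha, hab.symm⟩⟩
  _root_.symm h

theorem connectedOn_of_subset_of_adj_mem (hG : G.Connected) {A S : Finset V}
    (hA : ConnectedOn G.Adj A) (hAS : A ⊆ S) (hS : ∀ u ∈ S, u ∉ A → ∀ c, G.Adj u c → c ∈ S) :
    ConnectedOn G.Adj S := by
  obtain ⟨⟨a₀, ha₀⟩, hAconn⟩ := hA
  have reach (u : V) (hu : u ∈ S) :
      Relation.ReflTransGen (fun a b => a ∈ S ∧ b ∈ S ∧ G.Adj a b) u a₀ := by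
    -- A path of `G` from `u` to `a₀` stays in `S` until it first enters `A`.
    have hpath := (reachable_iff_reflTransGen u a₀).1 (hG.preconnected u a₀)
    induction hpath using Relation.ReflTransGen.head_induction_on with
    | refl => rfl
    | @head u c hadj _ ih =>
      by_cases huA : u ∈ A
      · exact (hAconn u huA a₀ ha₀).lift id fun _ _ ⟨ha, hb, hab⟩ => ⟨hAS ha, hAS hb, hab⟩
      · have hc := hS u hu huA c hadj
        exact (ih hc).head ⟨hu, hc, hadj⟩
  exact ⟨⟨a₀, hAS ha₀⟩, fun v hv w hw =>
    (reach v hv).trans (G.reflTransGen_induced_symm (reach w hw))⟩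

theorem exists_disjoint_union_of_not_connectedOn [DecidableEq V] {S : Finset V}
    (hS : S.Nonempty) (h : ¬ConnectedOn G.Adj S) :
    ∃ D₁ D₂ : Finset V, D₁.Nonempty ∧ D₂.Nonempty ∧ Disjoint D₁ D₂ ∧ D₁ ∪ D₂ = S ∧
      ∀ a ∈ D₁, ∀ b ∈ D₂, ¬G.Adj a b := by
  simp only [ConnectedOn, hS, true_and, not_forall] at h
  obtain ⟨v, hv, w, hw, hvw⟩ := h
  set D₁ := S.filter (Relation.ReflTransGen (fun a b => a ∈ S ∧ b ∈ S ∧ G.Adj a b) v)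
  refine ⟨D₁, S \ D₁, ⟨v, mem_filter.2 ⟨hv, .refl⟩⟩,
    ⟨w, Finset.mem_sdiff.2 ⟨hw, fun hwD => hvw (mem_filter.1 hwD).2⟩⟩, disjoint_sdiff,
    union_sdiff_of_subset (filter_subset _ _), fun a ha b hb hab => ?_⟩
  rw [Finset.mem_sdiff] at hb
  exact hb.2 (mem_filter.2 ⟨hb.1, (mem_filter.1 ha).2.tail ⟨filter_subset _ _ ha, hb.1, hab⟩⟩)

variable [Fintype V]

noncomputable def degSum (A : Finset V) : ℝ := ∑ x ∈ A, (rDeg G.Adj univ x : ℝ)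

local notation "π" => piSet G.Adj univ

theorem piSet_eq_degSum_div (A : Finset V) : π A = G.degSum A / G.degSum univ := by
  simp [piSet, degSum, rTotal]

theorem qBetween_eq_crossEdges_div (A B : Finset V) :
    qBetween G.Adj univ A B = G.crossEdges A B / G.degSum univ := by
  simp only [qBetween, crossEdges, card_filter, Nat.cast_sum, Nat.cast_ite, Nat.cast_one,
    Nat.cast_zero]
  congr 1
  simp [degSum, rTotal]

theorem degSum_mono {A B : Finset V} (h : A ⊆ B) : G.degSum A ≤ G.degSum B :=
  sum_le_sum_of_subset_of_nonneg h fun _ _ _ => by positivity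

theorem degSum_pos (hG : G.Connected) [Nontrivial V] {A : Finset V} (hA : A.Nonempty) :
    0 < G.degSum A := by
  refine sum_pos (fun x _ => ?_) hA
  obtain ⟨y, hxy⟩ := hG.preconnected.exists_adj_of_nontrivial x
  exact Nat.cast_pos.2 (card_pos.2 ⟨y, mem_filter.2 ⟨mem_univ y, hxy⟩⟩)

theorem nonempty_of_piSet_pos {A : Finset V} (h : 0 < π A) : A.Nonempty := by
  rw [nonempty_iff_ne_empty]
  rintro rfl
  simp [piSet] at h

theorem piSet_pos (hG : G.Connected) [Nontrivial V] {A : Finset V} (hA : A.Nonempty) :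
    0 < π A := by
  rw [piSet_eq_degSum_div]
  exact div_pos (G.degSum_pos hG hA) (G.degSum_pos hG univ_nonempty)

theorem piSet_mono {A B : Finset V} (h : A ⊆ B) : π A ≤ π B := by
  rw [piSet_eq_degSum_div, piSet_eq_degSum_div]
  exact div_le_div_of_nonneg_right (G.degSum_mono h) (sum_nonneg fun _ _ => by positivity)

section DecidableEq

variable [DecidableEq V]

local notation "φ" => conductance G.Adj univ

theorem degSum_union {A B : Finset V} (h : Disjoint A B) :
    G.degSum (A ∪ B) = G.degSum A + G.degSum B :=
  sum_union h

theorem piSet_compl (hG : G.Connected) [Nontrivial V] (A : Finset V) :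
    π (univ \ A) = 1 - π A := by
  have hT := G.degSum_pos hG univ_nonempty
  rw [piSet_eq_degSum_div, piSet_eq_degSum_div, eq_sub_iff_add_eq, ← add_div,
    ← degSum_union G disjoint_sdiff_self_left, sdiff_union_of_subset (subset_univ A),
    div_self hT.ne']

theorem compl_nonempty_of_piSet_le_half (hG : G.Connected) [Nontrivial V] {A : Finset V}
    (h : π A ≤ 1 / 2) : (univ \ A).Nonempty := by
  rw [nonempty_iff_ne_empty, Ne, sdiff_eq_empty_iff_subset, univ_subset_iff]
  rintro rfl
  rw [piSet_eq_degSum_div, div_self (G.degSum_pos hG univ_nonempty).ne'] at h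
  norm_num at h

theorem conductance_eq (A : Finset V) :
    φ A = G.degSum univ * G.crossEdges A (univ \ A) / (G.degSum A * G.degSum (univ \ A)) := by
  rw [conductance, qBetween_eq_crossEdges_div, piSet_eq_degSum_div, piSet_eq_degSum_div]
  rcases eq_or_ne (G.degSum univ) 0 with hT | hT
  · simp [hT]
  rcases eq_or_ne (G.degSum A * G.degSum (univ \ A)) 0 with h | h
  · simp [div_mul_div_comm, h]
  · field_simp

theorem conductance_compl (A : Finset V) : φ (univ \ A) = φ A := by
  rw [conductance_eq, conductance_eq, sdiff_sdiff_self_left, univ_inter, crossEdges_comm,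
    mul_comm (G.degSum (univ \ A))]

theorem conductance_le_or_conductance_le_of_union (hG : G.Connected) [Nontrivial V]
    {D₁ D₂ : Finset V} (h₁ : D₁.Nonempty) (h₂ : D₂.Nonempty) (hd : Disjoint D₁ D₂)
    (hno : ∀ a ∈ D₁, ∀ b ∈ D₂, ¬G.Adj a b) (hR : (univ \ (D₁ ∪ D₂)).Nonempty) :
    φ D₁ ≤ φ (D₁ ∪ D₂) ∨ φ D₂ ≤ φ (D₁ ∪ D₂) := by
  set R := univ \ (D₁ ∪ D₂)
  have hR₁ : Disjoint R D₁ := sdiff_disjoint.mono_right subset_union_left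
  have hR₂ : Disjoint R D₂ := sdiff_disjoint.mono_right subset_union_right
  have hc₁ : univ \ D₁ = R ∪ D₂ := by
    ext z
    have : z ∈ D₁ → z ∉ D₂ := fun hz => Finset.disjoint_left.1 hd hz
    simp only [R, Finset.mem_sdiff, mem_univ, true_and, mem_union]
    tauto
  have hc₂ : univ \ D₂ = R ∪ D₁ := by
    ext z
    have : z ∈ D₁ → z ∉ D₂ := fun hz => Finset.disjoint_left.1 hd hz
    simp only [R, Finset.mem_sdiff, mem_univ, true_and, mem_union]
    tauto
  have hφ₁ : φ D₁ = G.degSum univ * G.crossEdges D₁ R /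
      (G.degSum D₁ * (G.degSum R + G.degSum D₂)) := by
    rw [conductance_eq, hc₁, crossEdges_union_right G D₁ hR₂, degSum_union G hR₂,
      crossEdges_eq_zero G hno, add_zero]
  have hφ₂ : φ D₂ = G.degSum univ * G.crossEdges D₂ R /
      (G.degSum D₂ * (G.degSum R + G.degSum D₁)) := by
    rw [conductance_eq, hc₂, crossEdges_union_right G D₂ hR₁, degSum_union G hR₁,
      crossEdges_eq_zero G fun b hb a ha hba => hno a ha b hb hba.symm, add_zero]
  have hφ : φ (D₁ ∪ D₂) = (G.degSum univ * G.crossEdges D₁ R +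
      G.degSum univ * G.crossEdges D₂ R) / ((G.degSum D₁ + G.degSum D₂) * G.degSum R) := by
    rw [conductance_eq, crossEdges_union_left G hd, degSum_union G hd, mul_add]
  have hT := G.degSum_pos hG univ_nonempty
  rw [hφ₁, hφ₂, hφ]
  exact div_le_or_div_le_of_split (G.degSum_pos hG hR) (G.degSum_pos hG h₁)
    (G.degSum_pos hG h₂) (mul_nonneg hT.le (G.crossEdges_nonneg _ _))
    (mul_nonneg hT.le (G.crossEdges_nonneg _ _))

theorem exists_split_conductance_le_of_not_connectedOn (hG : G.Connected) [Nontrivial V]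
    {S : Finset V} (hS : S.Nonempty) (hSc : (univ \ S).Nonempty) (h : ¬ConnectedOn G.Adj S) :
    ∃ D₁ D₂ : Finset V, D₁.Nonempty ∧ D₂.Nonempty ∧ Disjoint D₁ D₂ ∧ D₁ ∪ D₂ = S ∧
      (∀ a ∈ D₁, ∀ b ∈ D₂, ¬G.Adj a b) ∧ φ D₁ ≤ φ S := by
  obtain ⟨D₁, D₂, h₁, h₂, hd, rfl, hno⟩ := G.exists_disjoint_union_of_not_connectedOn hS h
  rcases G.conductance_le_or_conductance_le_of_union hG h₁ h₂ hd hno hSc with hle | hle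
  · exact ⟨D₁, D₂, h₁, h₂, hd, rfl, hno, hle⟩
  · exact ⟨D₂, D₁, h₂, h₁, hd.symm, union_comm _ _, fun b hb a ha hba => hno a ha b hb hba.symm,
      hle⟩

theorem exists_connectedOn_isMin_conductance (hG : G.Connected) [Nontrivial V] {x : ℝ}
    (hx : x ≤ 1 / 2) (hne : ∃ A : Finset V, 0 < π A ∧ π A ≤ x) :
    ∃ A : Finset V, 0 < π A ∧ π A ≤ x ∧ ConnectedOn G.Adj A ∧
      ∀ B : Finset V, 0 < π B → π B ≤ x → φ A ≤ φ B := by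
  obtain ⟨A₁, hA₁⟩ := hne
  obtain ⟨A₀, hA₀, hA₀min⟩ := (univ.filter fun A => 0 < π A ∧ π A ≤ x).exists_min_image φ
    ⟨A₁, by simpa using hA₁⟩
  obtain ⟨A, hA, hAmin⟩ := (univ.filter fun A => (0 < π A ∧ π A ≤ x) ∧ φ A ≤ φ A₀).exists_min_image
    card ⟨A₀, by simpa using hA₀⟩
  simp only [mem_filter, mem_univ, true_and, and_imp] at hA₀ hA₀min hA hAmin
  obtain ⟨⟨hpos, hle⟩, hAA₀⟩ := hA
  refine ⟨A, hpos, hle, ?_, fun B h₁ h₂ => hAA₀.trans (hA₀min B h₁ h₂)⟩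
  by_contra hconn
  obtain ⟨D₁, D₂, h₁, h₂, hd, rfl, -, hφ⟩ := G.exists_split_conductance_le_of_not_connectedOn hG
    (G.nonempty_of_piSet_pos hpos) (G.compl_nonempty_of_piSet_le_half hG (hle.trans hx)) hconn
  have hcard := hAmin D₁ (G.piSet_pos hG h₁) ((G.piSet_mono subset_union_left).trans hle)
    (hφ.trans hAA₀)
  rw [card_union_of_disjoint hd] at hcard
  have := h₂.card_pos
  omega

theorem exists_connectedOn_compl_connectedOn_isMin_conductance (hG : G.Connected) [Nontrivial V]
    {A : Finset V} (hA : ConnectedOn G.Adj A) (hAc : (univ \ A).Nonempty)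
    (hAmin : ∀ B : Finset V, 0 < π B → π B ≤ 1 / 2 → φ A ≤ φ B) :
    ∃ C : Finset V, 0 < π C ∧ π C ≤ 1 / 2 ∧ ConnectedOn G.Adj C ∧
      ConnectedOn G.Adj (univ \ C) ∧ ∀ B : Finset V, 0 < π B → π B ≤ 1 / 2 → φ C ≤ φ B := by
  obtain ⟨S, hS, hSmin⟩ :=
    (univ.filter fun S => ConnectedOn G.Adj S ∧ (univ \ S).Nonempty ∧ φ S ≤ φ A).exists_min_image
      (fun S => (univ \ S).card) ⟨A, by simp [hA, hAc]⟩
  simp only [mem_filter, mem_univ, true_and, and_imp] at hS hSmin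
  obtain ⟨hSconn, hSc, hSA⟩ := hS
  have hmin (B : Finset V) (h₁ : 0 < π B) (h₂ : π B ≤ 1 / 2) : φ S ≤ φ B :=
    hSA.trans (hAmin B h₁ h₂)
  have hScconn : ConnectedOn G.Adj (univ \ S) := by
    by_contra hconn
    obtain ⟨D₁, D₂, h₁, h₂, hd, hunion, hno, hφ⟩ :=
      G.exists_split_conductance_le_of_not_connectedOn hG hSc (by simpa using hSconn.1) hconn
    have hSD₁ : S ⊆ univ \ D₁ := fun s hs => Finset.mem_sdiff.2 ⟨mem_univ s, fun hs₁ =>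
      (Finset.mem_sdiff.1 (hunion ▸ mem_union_left D₂ hs₁)).2 hs⟩
    have hD₁conn : ConnectedOn G.Adj (univ \ D₁) := by
      refine G.connectedOn_of_subset_of_adj_mem hG hSconn hSD₁ fun u hu huS c huc => ?_
      have huD₂ : u ∈ D₂ := by
        have : u ∈ D₁ ∪ D₂ := hunion ▸ Finset.mem_sdiff.2 ⟨mem_univ u, huS⟩
        exact (mem_union.1 this).resolve_left (Finset.mem_sdiff.1 hu).2
      exact Finset.mem_sdiff.2 ⟨mem_univ c, fun hc => hno c hc u huD₂ huc.symm⟩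
    have hcard := hSmin (univ \ D₁) hD₁conn (by simpa using h₁)
      (by rw [conductance_compl]; exact hφ.trans ((G.conductance_compl S).le.trans hSA))
    rw [sdiff_sdiff_self_left, univ_inter, ← hunion, card_union_of_disjoint hd] at hcard
    have := h₂.card_pos
    omega
  rcases le_or_gt (π S) (1 / 2) with hS | hS
  · exact ⟨S, G.piSet_pos hG hSconn.1, hS, hSconn, hScconn, hmin⟩
  · refine ⟨univ \ S, G.piSet_pos hG hSc, by rw [G.piSet_compl hG]; linarith, hScconn,
      by simpa using hSconn, fun B h₁ h₂ => ?_⟩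
    rw [conductance_compl]
    exact hmin B h₁ h₂

end DecidableEq

end SimpleGraph

theorem cheeger_min_attained_connected_general {V : Type*} [Fintype V] [DecidableEq V] [Nontrivial V]
    (G : SimpleGraph V) (hG : G.Connected) (x : ℝ)
    (hx2 : x ≤ 1 / 2)
    (hne : ∃ A : Finset V, 0 < piSet G.Adj Finset.univ A ∧ piSet G.Adj Finset.univ A ≤ x) :
    (∃ A : Finset V, 0 < piSet G.Adj Finset.univ A ∧ piSet G.Adj Finset.univ A ≤ x ∧
        ConnectedOn G.Adj A ∧
        ∀ B : Finset V, 0 < piSet G.Adj Finset.univ B → piSet G.Adj Finset.univ B ≤ x →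
          conductance G.Adj Finset.univ A ≤ conductance G.Adj Finset.univ B) ∧
      (∃ A : Finset V, 0 < piSet G.Adj Finset.univ A ∧ piSet G.Adj Finset.univ A ≤ 1 / 2 ∧
        ConnectedOn G.Adj A ∧ ConnectedOn G.Adj (Finset.univ \ A) ∧
        ∀ B : Finset V, 0 < piSet G.Adj Finset.univ B → piSet G.Adj Finset.univ B ≤ 1 / 2 →
          conductance G.Adj Finset.univ A ≤ conductance G.Adj Finset.univ B) := by
  obtain ⟨A, -, hA, hAconn, hAmin⟩ := G.exists_connectedOn_isMin_conductance hG le_rfl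
    (hne.imp fun _ hB => ⟨hB.1, hB.2.trans hx2⟩)
  exact ⟨G.exists_connectedOn_isMin_conductance hG hx2 hne,
    G.exists_connectedOn_compl_connectedOn_isMin_conductance hG hAconn
      (G.compl_nonempty_of_piSet_le_half hG hA) hAmin⟩

/-- In a finite connected graph the minimum in the definition of `φ(x)` is
attained at a connected set, and the minimum in the definition of the Cheeger constant `φ`
is attained at a set `A` with both `A` and `Aᶜ` connected. -/
theorem cheeger_min_attained_connected {V : Type*} [Fintype V] [DecidableEq V] [Nontrivial V]
    (G : SimpleGraph V) [DecidableRel G.Adj] (hG : G.Connected) (x : ℝ) (hx : 0 < x)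
    (hx2 : x ≤ 1 / 2)
    (hne : ∃ A : Finset V, 0 < piSet G.Adj Finset.univ A ∧ piSet G.Adj Finset.univ A ≤ x) :
    (∃ A : Finset V, 0 < piSet G.Adj Finset.univ A ∧ piSet G.Adj Finset.univ A ≤ x ∧
        ConnectedOn G.Adj A ∧
        ∀ B : Finset V, 0 < piSet G.Adj Finset.univ B → piSet G.Adj Finset.univ B ≤ x →
          conductance G.Adj Finset.univ A ≤ conductance G.Adj Finset.univ B) ∧
      (∃ A : Finset V, 0 < piSet G.Adj Finset.univ A ∧ piSet G.Adj Finset.univ A ≤ 1 / 2 ∧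
        ConnectedOn G.Adj A ∧ ConnectedOn G.Adj (Finset.univ \ A) ∧
        ∀ B : Finset V, 0 < piSet G.Adj Finset.univ B → piSet G.Adj Finset.univ B ≤ 1 / 2 →
          conductance G.Adj Finset.univ A ≤ conductance G.Adj Finset.univ B) :=
  cheeger_min_attained_connected_general G hG x hx2 hne
end

section
/- For every d ≥ 2 and every pair of vertices v, w of B_d(n), the number of minimal cutsets of edges of size m separating v from w in B_d(n) is at most c(d)^m for some constant c(d) depending only on d. -/
open MeasureTheory Filter
open scoped ENNReal Classical

/-!
A minimal cutset `B` is the edge boundary of the part of `v` (the vertices reachable from `v`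
avoiding `B`), and each of its edges joins the part of `v` to the part of `w`. Over `𝔽₂` this
makes `B` meet every unit square of the box evenly. Every even edge set of the box is a sum of
such squares, and joining two edges `e, f ∈ B` by paths on either side of `B` gives an even edge
set meeting `B` only in `e` and `f`; applied to the plaquette component of `e`, this shows that
`B` is connected for the plaquette adjacency. A connected set of `m` edges is traced by a walk of
fewer than `2m` steps between edges with nearby base points, so `B` lies in a cube of radius `2m`;
since `d ≥ 2`, this cube is within distance `4m` of `v` or `w`, for otherwise both would reach a
far corner of the box. Choosing the first edge of the walk near `v` or `w` and then each step
among `3^d d` neighbours bounds the number of cutsets by `2 d (8m+1)^d (3^d d + 1)^{2m} ≤ c^m`.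
-/
open scoped symmDiff
open Finset

section Generic

variable {α : Type*} [DecidableEq α]

lemma Finset.sum_symmDiff_add_two_nsmul {M : Type*} [AddCommMonoid M]
    (s t : Finset α) (f : α → M) :
    ∑ x ∈ s ∆ t, f x + 2 • ∑ x ∈ s ∩ t, f x = ∑ x ∈ s, f x + ∑ x ∈ t, f x := by
  rw [← sum_union_inter, two_nsmul, ← add_assoc, symmDiff_eq_sup_sdiff_inf]
  congr 1
  exact sum_sdiff (inter_subset_left.trans subset_union_left)

lemma Finset.sum_symmDiff_zmod_two (s t : Finset α) (f : α → ZMod 2) :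
    ∑ x ∈ s ∆ t, f x = ∑ x ∈ s, f x + ∑ x ∈ t, f x := by
  rw [← sum_symmDiff_add_two_nsmul, CharTwo.two_nsmul, add_zero]

/-- Chains starting at `x` in which each element lies in the neighbourhood `N` of its
predecessor; `k` counts steps, so the chains have length at most `k + 1`. -/
def chainsFrom (N : α → Finset α) : α → ℕ → Finset (List α)
  | x, 0 => {[x]}
  | x, k + 1 => insert [x] ((N x).biUnion fun y => (chainsFrom N y k).image (List.cons x))

lemma card_chainsFrom_le (N : α → Finset α) {D : ℕ} (hD : ∀ x, #(N x) ≤ D) (x : α) (k : ℕ) :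
    #(chainsFrom N x k) ≤ (D + 1) ^ k := by
  induction k generalizing x with
  | zero => simp [chainsFrom]
  | succ k ih =>
    calc #(chainsFrom N x (k + 1))
        ≤ ∑ y ∈ N x, #((chainsFrom N y k).image (List.cons x)) + 1 :=
          (card_insert_le _ _).trans (by gcongr; exact card_biUnion_le)
      _ ≤ ∑ _y ∈ N x, (D + 1) ^ k + 1 := by
          gcongr with y; exact card_image_le.trans (ih y)
      _ ≤ (D + 1) ^ (k + 1) := by
          rw [sum_const, smul_eq_mul, pow_succ]
          nlinarith [hD x, Nat.one_le_pow k (D + 1) (Nat.succ_pos D)]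

lemma mem_chainsFrom {N : α → Finset α} {r : α → α → Prop} (hN : ∀ x y, r x y → y ∈ N x)
    {l : List α} (hl : l.IsChain r) {x : α} (hx : l.head? = some x) {k : ℕ}
    (hk : l.length ≤ k + 1) : l ∈ chainsFrom N x k := by
  induction k generalizing l x with
  | zero =>
    obtain ⟨⟩ | ⟨y, _ | ⟨z, t⟩⟩ := l <;> simp_all [chainsFrom]
  | succ k ih =>
    obtain ⟨⟩ | ⟨y, _ | ⟨z, t⟩⟩ := l
    · simp at hx
    · simp_all [chainsFrom]
    · obtain rfl : y = x := by simpa using hx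
      rw [List.isChain_cons_cons] at hl
      simp only [chainsFrom, mem_insert, mem_biUnion, mem_image]
      exact .inr ⟨z, hN _ _ hl.1, z :: t, ih hl.2 rfl (by simpa using hk), rfl⟩

lemma List.IsChain.exists_detour {r : α → α → Prop} {l : List α} (hl : l.IsChain r) {x y : α}
    (hx : x ∈ l) (hxy : r x y) (hyx : r y x) :
    ∃ l' : List α, l'.head? = l.head? ∧ l'.IsChain r ∧ l'.toFinset = insert y l.toFinset ∧
      l'.length = l.length + 2 := by
  obtain ⟨s, t, rfl⟩ := List.append_of_mem hx
  refine ⟨s ++ x :: y :: x :: t, by simp [List.head?_append], ?_, ?_, by simp; omega⟩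
  · rw [List.isChain_split] at hl ⊢
    exact ⟨hl.1, List.isChain_cons_cons.mpr ⟨hxy, List.isChain_cons_cons.mpr ⟨hyx, hl.2⟩⟩⟩
  · ext z
    simp only [List.toFinset_append, List.toFinset_cons, mem_union, mem_insert]
    tauto

lemma exists_rel_mem_notMem_of_reflTransGen {r : α → α → Prop} {T : Finset α} {a b : α}
    (h : Relation.ReflTransGen r a b) (ha : a ∈ T) (hb : b ∉ T) : ∃ x ∈ T, ∃ y ∉ T, r x y := by
  induction h with
  | refl => exact absurd ha hb
  | @tail c b _ hcb ih => by_cases hc : c ∈ T <;> [exact ⟨c, hc, b, hb, hcb⟩; exact ih hc]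

lemma ConnectedOn.exists_isChain_toFinset_eq {r : α → α → Prop} (hr : ∀ x y, r x y → r y x)
    {S : Finset α} (hS : ConnectedOn r S) {a : α} (ha : a ∈ S) :
    ∃ l : List α, l.head? = some a ∧ l.IsChain r ∧ l.toFinset = S ∧ l.length < 2 * #S := by
  have hgrow : ∀ k, ∃ l : List α, l.head? = some a ∧ l.IsChain r ∧ l.toFinset ⊆ S ∧
      l.length + 1 ≤ 2 * #l.toFinset ∧ min (k + 1) #S ≤ #l.toFinset := by
    intro k
    induction k with
    | zero => exact ⟨[a], rfl, List.isChain_singleton a, by simpa using ha, by simp, by simp⟩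
    | succ k ih =>
      obtain ⟨l, hla, hl, hlS, hlen, hcard⟩ := ih
      by_cases hfull : l.toFinset = S
      · exact ⟨l, hla, hl, hlS, hlen, by rw [hfull]; exact min_le_right _ _⟩
      obtain ⟨z, hzS, hzl⟩ := exists_of_ssubset (ssubset_of_subset_of_ne hlS hfull)
      obtain ⟨x, hxl, y, hyl, hxy⟩ := exists_rel_mem_notMem_of_reflTransGen (hS.2 a ha z hzS)
        (by simpa using List.mem_of_mem_head? hla) hzl
      obtain ⟨l', hl'a, hl', hl'S, hl'len⟩ :=
        hl.exists_detour (List.mem_toFinset.mp hxl) hxy.2.2 (hr _ _ hxy.2.2)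
      refine ⟨l', hl'a.trans hla, hl', hl'S ▸ insert_subset hxy.2.1 hlS, ?_, ?_⟩ <;>
        rw [hl'S, card_insert_of_notMem hyl] <;> omega
  obtain ⟨l, hla, hl, hlS, hlen, hcard⟩ := hgrow #S
  have hlS' := eq_of_subset_of_card_le hlS (by omega)
  exact ⟨l, hla, hl, hlS', by rw [← hlS']; omega⟩

end Generic

section Lattice

variable {d n : ℕ}

lemma mem_boxFinset {x : Vert d} : x ∈ boxFinset d n ↔ ∀ i, -(n : ℤ) ≤ x i ∧ x i ≤ n := by
  simp [boxFinset, Fintype.mem_piFinset]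

lemma mem_boxEdgeFinset {e : EdgeZ d} :
    e ∈ boxEdgeFinset d n ↔ e.1 ∈ boxFinset d n ∧ edgeSnd e ∈ boxFinset d n := by
  simp [boxEdgeFinset]

namespace BoxCutset

def square (a : Vert d) (i j : Fin d) : Finset (EdgeZ d) :=
  {(a, i), (a, j), (a + unitVec d i, j), (a + unitVec d j, i)}

lemma sum_square {M : Type*} [AddCommMonoid M] (F : EdgeZ d → M) {a : Vert d} {i j : Fin d}
    (hij : i ≠ j) :
    ∑ g ∈ square a i j, F g =
      F (a, i) + F (a, j) + F (a + unitVec d i, j) + F (a + unitVec d j, i) := by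
  have hi : a + unitVec d i ≠ a := fun h => by simpa [unitVec] using congrFun h i
  have hj : a + unitVec d j ≠ a := fun h => by simpa [unitVec] using congrFun h j
  rw [square, sum_insert, sum_insert, sum_insert, sum_singleton, add_assoc, add_assoc] <;>
    simp [Prod.ext_iff, hij, hij.symm, hi.symm, hj.symm]

def coboundary (f : Vert d → ZMod 2) (g : EdgeZ d) : ZMod 2 := f g.1 + f (edgeSnd g)

/-- Even degree at every vertex, phrased as orthogonality to all coboundaries over `𝔽₂`. -/
def IsEvenSet (z : Finset (EdgeZ d)) : Prop :=
  ∀ f : Vert d → ZMod 2, ∑ g ∈ z, coboundary f g = 0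

lemma IsEvenSet.symmDiff {z z' : Finset (EdgeZ d)} (hz : IsEvenSet z) (hz' : IsEvenSet z') :
    IsEvenSet (z ∆ z') := fun f => by
  rw [sum_symmDiff_zmod_two, hz f, hz' f, add_zero]

lemma add_unitVec_comm (a : Vert d) (i j : Fin d) :
    a + unitVec d j + unitVec d i = a + unitVec d i + unitVec d j := add_right_comm _ _ _

lemma isEvenSet_square (a : Vert d) {i j : Fin d} (hij : i ≠ j) :
    IsEvenSet (square a i j) := fun f => by
  rw [sum_square _ hij]
  simp only [coboundary, edgeSnd, add_unitVec_comm]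
  linear_combination CharTwo.add_self_eq_zero
    (f a + f (a + unitVec d i) + f (a + unitVec d j) + f (a + unitVec d i + unitVec d j))

def height (n : ℕ) (y : Vert d) : ℤ := ∑ k, (y k + n)

lemma height_nonneg {y : Vert d} (hy : y ∈ boxFinset d n) : 0 ≤ height n y :=
  sum_nonneg fun k _ => by linarith [(mem_boxFinset.mp hy k).1]

lemma height_add_unitVec (y : Vert d) (i : Fin d) :
    height n (y + unitVec d i) = height n y + 1 := by
  simp only [height, Pi.add_apply, unitVec, add_right_comm _ _ (n : ℤ), sum_add_distrib,
    sum_ite_eq', mem_univ, if_true]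

def potential (n : ℕ) (z : Finset (EdgeZ d)) : ℤ := ∑ g ∈ z, height n (edgeSnd g)

lemma potential_nonneg {z : Finset (EdgeZ d)} (hz : z ⊆ boxEdgeFinset d n) :
    0 ≤ potential n z :=
  sum_nonneg fun _ hg => height_nonneg (mem_boxEdgeFinset.mp (hz hg)).2

lemma IsEvenSet.exists_ne_edgeSnd_eq {z : Finset (EdgeZ d)} (hev : IsEvenSet z)
    (hne : z.Nonempty) : ∃ g ∈ z, ∃ g' ∈ z, g' ≠ g ∧ edgeSnd g' = edgeSnd g := by
  obtain ⟨g, hg, hmax⟩ := exists_max_image z (fun g => height 0 (edgeSnd g)) hne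
  -- no edge of `z` leaves the highest head `x`, so the edges entering `x` are even in number
  set x := edgeSnd g
  have hin : ∀ h ∈ z, coboundary (Pi.single x 1) h = if edgeSnd h = x then 1 else 0 := by
    intro h hh
    have hbase : h.1 ≠ x := fun hx => by
      have := hmax h hh
      rw [edgeSnd, hx, height_add_unitVec] at this
      omega
    simp [coboundary, Pi.single_apply, hbase]
  have heven := hev (Pi.single x 1)
  rw [sum_congr rfl hin, ← natCast_card_filter, ZMod.natCast_eq_zero_iff_even] at heven
  have hcard : 1 < #(z.filter fun h => edgeSnd h = x) := by
    obtain ⟨k, hk⟩ := heven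
    have := card_pos.mpr
      (⟨g, mem_filter.mpr ⟨hg, rfl⟩⟩ : (z.filter fun h => edgeSnd h = x).Nonempty)
    omega
  obtain ⟨g', hg', hne'⟩ := exists_mem_ne hcard g
  exact ⟨g, hg, g', (mem_filter.mp hg').1, hne', (mem_filter.mp hg').2⟩

lemma sub_unitVec_mem_boxFinset {b b' : Vert d} {i j : Fin d} (hij : i ≠ j)
    (hx : b + unitVec d i = b' + unitVec d j) (hb : b ∈ boxFinset d n)
    (hb' : b' ∈ boxFinset d n) : b - unitVec d j ∈ boxFinset d n := by
  have hcoord : ∀ k, (b - unitVec d j) k = b k ∨ (b - unitVec d j) k = b' k := by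
    intro k
    have hk := congrFun hx k
    by_cases hkj : k = j
    · subst hkj
      simp only [Pi.add_apply, Pi.sub_apply, unitVec, hij.symm, if_true, if_false, add_zero]
        at hk ⊢
      omega
    · simp [unitVec, hkj]
  rw [mem_boxFinset]
  intro k
  rcases hcoord k with h | h <;> rw [h]
  · exact mem_boxFinset.mp hb k
  · exact mem_boxFinset.mp hb' k

lemma exists_square_of_edgeSnd_eq {g g' : EdgeZ d} (hg : g ∈ boxEdgeFinset d n)
    (hg' : g' ∈ boxEdgeFinset d n) (hne : g' ≠ g) (hsnd : edgeSnd g' = edgeSnd g) :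
    ∃ a, g.2 ≠ g'.2 ∧ square a g.2 g'.2 ⊆ boxEdgeFinset d n ∧ g ∈ square a g.2 g'.2 ∧
      g' ∈ square a g.2 g'.2 ∧
      potential n (square a g.2 g'.2) = 4 * height n (edgeSnd g) - 2 := by
  obtain ⟨b, i⟩ := g
  obtain ⟨b', j⟩ := g'
  have hx : b + unitVec d i = b' + unitVec d j := hsnd.symm
  have hij : i ≠ j := by
    rintro rfl
    exact hne (Prod.ext (add_right_cancel hx).symm rfl)
  have hb' : b - unitVec d j + unitVec d i = b' := by
    rw [sub_add_eq_add_sub, hx, add_sub_cancel_right]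
  have hb : b - unitVec d j + unitVec d j = b := sub_add_cancel b _
  have ha := sub_unitVec_mem_boxFinset hij hx (mem_boxEdgeFinset.mp hg).1
    (mem_boxEdgeFinset.mp hg').1
  refine ⟨b - unitVec d j, hij, ?_, ?_, ?_, ?_⟩
  · intro e he
    simp only [square, mem_insert, mem_singleton] at he
    rcases he with rfl | rfl | rfl | rfl
    · exact mem_boxEdgeFinset.mpr ⟨ha, by simpa [edgeSnd, hb'] using (mem_boxEdgeFinset.mp hg').1⟩
    · exact mem_boxEdgeFinset.mpr ⟨ha, by simpa [edgeSnd, hb] using (mem_boxEdgeFinset.mp hg).1⟩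
    · rwa [hb']
    · rwa [hb]
  · simp [square, hb]
  · simp [square, hb']
  · have hh := height_add_unitVec (n := n) b i
    have hh' := height_add_unitVec (n := n) b' j
    rw [potential, sum_square _ hij, hb, hb']
    simp only [edgeSnd, hb, hb'] at hh hh' ⊢
    rw [← hx] at hh' ⊢
    linarith

lemma exists_square_potential_lt {z : Finset (EdgeZ d)} (hz : z ⊆ boxEdgeFinset d n)
    (hev : IsEvenSet z) (hne : z.Nonempty) :
    ∃ a i j, i ≠ j ∧ square a i j ⊆ boxEdgeFinset d n ∧
      potential n (z ∆ square a i j) < potential n z := by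
  obtain ⟨g, hg, g', hg', hne', hsnd⟩ := hev.exists_ne_edgeSnd_eq hne
  obtain ⟨a, hij, hs, hgs, hg's, hpot⟩ := exists_square_of_edgeSnd_eq (hz hg) (hz hg') hne' hsnd
  refine ⟨a, g.2, g'.2, hij, hs, ?_⟩
  have hsplit := sum_symmDiff_add_two_nsmul z (square a g.2 g'.2) fun g => height n (edgeSnd g)
  have hinter : height n (edgeSnd g) + height n (edgeSnd g') ≤
      ∑ h ∈ z ∩ square a g.2 g'.2, height n (edgeSnd h) := by
    rw [← sum_pair (f := fun h => height n (edgeSnd h)) hne'.symm]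
    refine sum_le_sum_of_subset_of_nonneg ?_ fun h hh _ => ?_
    · simp [insert_subset_iff, hg, hg', hgs, hg's]
    · exact height_nonneg (mem_boxEdgeFinset.mp (hz (mem_inter.mp hh).1)).2
  simp only [potential] at hpot ⊢
  rw [hsnd] at hinter
  rw [two_nsmul] at hsplit
  linarith

/-- Every even edge set of the box is a sum of squares of the box. -/
theorem sum_eq_zero_of_isEvenSet (f : EdgeZ d → ZMod 2)
    (hf : ∀ a i j, i ≠ j → square a i j ⊆ boxEdgeFinset d n → ∑ g ∈ square a i j, f g = 0)
    {z : Finset (EdgeZ d)} (hz : z ⊆ boxEdgeFinset d n) (hev : IsEvenSet z) :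
    ∑ g ∈ z, f g = 0 := by
  induction hN : (potential n z).toNat using Nat.strong_induction_on generalizing z with
  | _ N ih =>
  rcases z.eq_empty_or_nonempty with rfl | hne
  · simp
  obtain ⟨a, i, j, hij, hs, hlt⟩ := exists_square_potential_lt hz hev hne
  have hzs : z ∆ square a i j ⊆ boxEdgeFinset d n := symmDiff_le_sup.trans (union_subset hz hs)
  rw [← symmDiff_symmDiff_cancel_right (square a i j) z, sum_symmDiff_zmod_two,
    hf a i j hij hs, add_zero]
  have := potential_nonneg hzs
  exact ih _ (by omega) hzs (hev.symmDiff (isEvenSet_square a hij)) rfl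

/-- Plaquette adjacency. -/
def SharesSquare (g h : EdgeZ d) : Prop :=
  ∃ a i j, i ≠ j ∧ g ∈ square a i j ∧ h ∈ square a i j

def EdgeNear (g h : EdgeZ d) : Prop := ∀ j, |g.1 j - h.1 j| ≤ 1

noncomputable def ballFinset (c : Vert d) (r : ℕ) : Finset (Vert d) :=
  Fintype.piFinset fun j => Icc (c j - r) (c j + r)

noncomputable def nearEdges (g : EdgeZ d) : Finset (EdgeZ d) := ballFinset g.1 1 ×ˢ univ

lemma mem_ballFinset {c x : Vert d} {r : ℕ} : x ∈ ballFinset c r ↔ ∀ j, |x j - c j| ≤ r := by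
  simp only [ballFinset, Fintype.mem_piFinset, mem_Icc, abs_le]
  exact forall_congr' fun j => by constructor <;> rintro ⟨h1, h2⟩ <;> constructor <;> linarith

lemma card_ballFinset (c : Vert d) (r : ℕ) : #(ballFinset c r) = (2 * r + 1) ^ d := by
  have hI : ∀ x : ℤ, (x + r + 1 - (x - r)).toNat = 2 * r + 1 := fun x => by omega
  simp only [ballFinset, Fintype.card_piFinset, Int.card_Icc, hI, prod_const, card_univ,
    Fintype.card_fin]

lemma card_nearEdges (g : EdgeZ d) : #(nearEdges g) = 3 ^ d * d := by
  simp [nearEdges, card_ballFinset]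

lemma EdgeNear.symm {g h : EdgeZ d} (hgh : EdgeNear g h) : EdgeNear h g :=
  fun j => abs_sub_comm (g.1 j) (h.1 j) ▸ hgh j

lemma EdgeNear.mem_nearEdges {g h : EdgeZ d} (hgh : EdgeNear g h) : h ∈ nearEdges g :=
  mem_product.mpr ⟨mem_ballFinset.mpr fun j => by simpa using hgh.symm j, mem_univ _⟩

lemma sub_mem_Icc_of_mem_square {a : Vert d} {i j : Fin d} {g : EdgeZ d}
    (hg : g ∈ square a i j) (k : Fin d) : 0 ≤ g.1 k - a k ∧ g.1 k - a k ≤ 1 := by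
  simp only [square, mem_insert, mem_singleton] at hg
  rcases hg with rfl | rfl | rfl | rfl <;> simp only [unitVec, Pi.add_apply] <;>
    (try split_ifs) <;> omega

lemma SharesSquare.edgeNear {g h : EdgeZ d} (hgh : SharesSquare g h) : EdgeNear g h := by
  obtain ⟨a, i, j, -, hg, hh⟩ := hgh
  intro k
  have := sub_mem_Icc_of_mem_square hg k
  have := sub_mem_Icc_of_mem_square hh k
  rw [abs_le]
  constructor <;> linarith

lemma abs_sub_lt_length_of_isChain {l : List (EdgeZ d)} (hl : l.IsChain EdgeNear) {x : EdgeZ d}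
    (hx : l.head? = some x) {g : EdgeZ d} (hg : g ∈ l) (j : Fin d) :
    |g.1 j - x.1 j| < l.length := by
  induction l generalizing x with
  | nil => simp at hg
  | cons y t ih =>
    obtain rfl : y = x := by simpa using hx
    rcases List.mem_cons.mp hg with rfl | hgt
    · simp
    obtain ⟨z, t', rfl⟩ := List.exists_cons_of_ne_nil (List.ne_nil_of_mem hgt)
    rw [List.isChain_cons_cons] at hl
    have h1 := ih hl.2 rfl hgt
    have h2 := hl.1.symm j
    have h3 := abs_sub_le (g.1 j) (z.1 j) (y.1 j)
    simp only [List.length_cons, Nat.cast_add, Nat.cast_one] at h1 ⊢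
    linarith

end BoxCutset

open BoxCutset

variable {B : Finset (EdgeZ d)} {v w : Vert d}

lemma avoidConn_of_edge {e : EdgeZ d} (he : e ∈ boxEdgeFinset d n) (heB : e ∉ B) :
    avoidConn d n B e.1 (edgeSnd e) :=
  .single ⟨e, he, heB, .inl ⟨rfl, rfl⟩⟩

lemma avoidConn_symm {a b : Vert d} (h : avoidConn d n B a b) : avoidConn d n B b a := by
  induction h with
  | refl => exact .refl
  | tail _ hst ih =>
    obtain ⟨e, he, heB, hends⟩ := hst
    exact .head ⟨e, he, heB, hends.symm⟩ ih

lemma avoidConn_trans {a b c : Vert d} (hab : avoidConn d n B a b) (hbc : avoidConn d n B b c) :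
    avoidConn d n B a c :=
  Relation.ReflTransGen.trans hab hbc

lemma IsMinimalCutset.symm (hB : IsMinimalCutset d n v w B) : IsMinimalCutset d n w v B :=
  ⟨⟨hB.1.1, fun h => hB.1.2 (avoidConn_symm h)⟩,
    fun B' hB' h => hB.2 B' hB' ⟨h.1, fun h' => h.2 (avoidConn_symm h')⟩⟩

/-- The edge set of a path: its degree is odd exactly at the two ends. -/
lemma exists_edgeSet_of_avoidConn {a b : Vert d} (h : avoidConn d n B a b) :
    ∃ E ⊆ boxEdgeFinset d n, Disjoint E B ∧ ∀ f, ∑ g ∈ E, coboundary f g = f a + f b := by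
  induction h with
  | refl =>
    exact ⟨∅, empty_subset _, disjoint_empty_left _, fun f => by simp [CharTwo.add_self_eq_zero]⟩
  | @tail b c _ hst ih =>
    obtain ⟨E, hEbox, hEB, hE⟩ := ih
    obtain ⟨e, he, heB, hends⟩ := hst
    refine ⟨E ∆ {e}, symmDiff_le_sup.trans (union_subset hEbox (singleton_subset_iff.mpr he)),
      disjoint_of_subset_left symmDiff_le_sup
        (disjoint_union_left.mpr ⟨hEB, disjoint_singleton_left.mpr heB⟩), fun f => ?_⟩
    rw [sum_symmDiff_zmod_two, hE, sum_singleton, coboundary]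
    rcases hends with ⟨h1, h2⟩ | ⟨h1, h2⟩ <;> rw [h1, h2] <;>
      linear_combination CharTwo.add_self_eq_zero (f b)

lemma IsMinimalCutset.avoidConn_endpoint (hB : IsMinimalCutset d n v w B) {g : EdgeZ d}
    (hg : g ∈ B) : avoidConn d n B v g.1 ∨ avoidConn d n B v (edgeSnd g) := by
  by_contra! hfar
  -- the part of `v` is closed under the steps that use `g` too, as `g` does not touch it
  have hclosed : ∀ x, avoidConn d n (B.erase g) v x → avoidConn d n B v x := by
    intro x hx
    induction hx with
    | refl => exact .refl
    | tail _ hst ih =>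
      obtain ⟨e, he, heB, hends⟩ := hst
      have heB' : e ∉ B := fun heB' => by
        obtain rfl : e = g := by_contra fun hne => heB (mem_erase.mpr ⟨hne, heB'⟩)
        rcases hends with ⟨h, _⟩ | ⟨_, h⟩
        · exact hfar.1 (h ▸ ih)
        · exact hfar.2 (h ▸ ih)
      exact ih.tail ⟨e, he, heB', hends⟩
  exact hB.2 (B.erase g) (erase_ssubset hg)
    ⟨(erase_subset g B).trans hB.1.1, fun hvw => hB.1.2 (hclosed w hvw)⟩

lemma IsMinimalCutset.exists_endpoints (hB : IsMinimalCutset d n v w B) {g : EdgeZ d}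
    (hg : g ∈ B) : ∃ p q, avoidConn d n B v p ∧ avoidConn d n B q w ∧
      ∀ f, coboundary f g = f p + f q := by
  have hsep : ∀ x, avoidConn d n B v x → ¬ avoidConn d n B w x :=
    fun x hvx hwx => hB.1.2 (avoidConn_trans hvx (avoidConn_symm hwx))
  rcases hB.avoidConn_endpoint hg with hv | hv <;>
    rcases hB.symm.avoidConn_endpoint hg with hw | hw
  · exact (hsep _ hv hw).elim
  · exact ⟨_, _, hv, avoidConn_symm hw, fun f => rfl⟩
  · exact ⟨_, _, hv, avoidConn_symm hw, fun f => add_comm _ _⟩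
  · exact (hsep _ hv hw).elim

/-- A minimal cutset is the edge boundary of the part of `v`. -/
lemma IsMinimalCutset.indicator_eq_coboundary (hB : IsMinimalCutset d n v w B) {g : EdgeZ d}
    (hg : g ∈ boxEdgeFinset d n) :
    (if g ∈ B then 1 else 0 : ZMod 2) =
      coboundary (fun x => if avoidConn d n B v x then 1 else 0) g := by
  by_cases hgB : g ∈ B
  · obtain ⟨p, q, hp, hq, hpq⟩ := hB.exists_endpoints hgB
    have hq' : ¬ avoidConn d n B v q := fun h => hB.1.2 (avoidConn_trans h hq)
    simp [hpq, hgB, hp, hq']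
  · have hstep := avoidConn_of_edge hg hgB
    by_cases h : avoidConn d n B v g.1
    · simp [coboundary, hgB, h, avoidConn_trans h hstep, CharTwo.add_self_eq_zero]
    · have h' : ¬ avoidConn d n B v (edgeSnd g) := fun h' =>
        h (avoidConn_trans h' (avoidConn_symm hstep))
      simp [coboundary, hgB, h, h']

lemma IsMinimalCutset.sum_square_eq_zero (hB : IsMinimalCutset d n v w B) {a : Vert d}
    {i j : Fin d} (hij : i ≠ j) (hs : square a i j ⊆ boxEdgeFinset d n) :
    ∑ g ∈ square a i j, (if g ∈ B then 1 else 0 : ZMod 2) = 0 := by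
  rw [sum_congr rfl fun g hg => hB.indicator_eq_coboundary (hs hg)]
  exact isEvenSet_square a hij _

lemma IsMinimalCutset.sum_square_eq_zero_of_closed (hB : IsMinimalCutset d n v w B)
    {X : Finset (EdgeZ d)} (hXB : X ⊆ B) (hX : ∀ g ∈ X, ∀ h ∈ B, SharesSquare g h → h ∈ X)
    {a : Vert d} {i j : Fin d} (hij : i ≠ j) (hs : square a i j ⊆ boxEdgeFinset d n) :
    ∑ g ∈ square a i j, (if g ∈ X then 1 else 0 : ZMod 2) = 0 := by
  by_cases hmeet : ∃ g ∈ square a i j, g ∈ X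
  · obtain ⟨g₁, hg₁s, hg₁X⟩ := hmeet
    refine (sum_congr rfl fun g hg => if_congr ?_ rfl rfl).trans (hB.sum_square_eq_zero hij hs)
    exact ⟨fun h => hXB h, fun h => hX g₁ hg₁X g h ⟨a, i, j, hij, hg₁s, hg⟩⟩
  · push Not at hmeet
    exact sum_eq_zero fun g hg => if_neg (hmeet g hg)

/-- The plaquette component `X` of `e` in `B` meets every square of the box evenly, hence also
every even edge set. Closing paths from `e` to `f` on both sides of `B` gives an even edge set
that meets `B` exactly in `e` and `f`, so `f ∈ X`. -/
theorem IsMinimalCutset.connectedOn_sharesSquare (hB : IsMinimalCutset d n v w B)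
    (hne : B.Nonempty) : ConnectedOn SharesSquare B := by
  refine ⟨hne, fun e he f hf => ?_⟩
  set X := B.filter (Relation.ReflTransGen (fun a b => a ∈ B ∧ b ∈ B ∧ SharesSquare a b) e)
  set χ : EdgeZ d → ZMod 2 := fun g => if g ∈ X then 1 else 0
  have hsq : ∀ a i j, i ≠ j → square a i j ⊆ boxEdgeFinset d n →
      ∑ g ∈ square a i j, χ g = 0 := fun a i j hij hs =>
    hB.sum_square_eq_zero_of_closed (filter_subset _ B) (fun g hg h hh hgh =>
      mem_filter.mpr ⟨hh, (mem_filter.mp hg).2.tail ⟨(mem_filter.mp hg).1, hh, hgh⟩⟩) hij hs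
  obtain ⟨pe, qe, hpe, hqe, he'⟩ := hB.exists_endpoints he
  obtain ⟨pf, qf, hpf, hqf, hf'⟩ := hB.exists_endpoints hf
  obtain ⟨E₁, hE₁, hE₁B, hE₁f⟩ :=
    exists_edgeSet_of_avoidConn (avoidConn_trans (avoidConn_symm hpe) hpf)
  obtain ⟨E₂, hE₂, hE₂B, hE₂f⟩ :=
    exists_edgeSet_of_avoidConn (avoidConn_trans hqe (avoidConn_symm hqf))
  have hbox : ({e} ∆ {f}) ∆ (E₁ ∆ E₂) ⊆ boxEdgeFinset d n :=
    symmDiff_le_sup.trans (union_subset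
      (symmDiff_le_sup.trans (union_subset (singleton_subset_iff.mpr (hB.1.1 he))
        (singleton_subset_iff.mpr (hB.1.1 hf))))
      (symmDiff_le_sup.trans (union_subset hE₁ hE₂)))
  have heven : IsEvenSet (({e} ∆ {f}) ∆ (E₁ ∆ E₂)) := fun φ => by
    simp only [sum_symmDiff_zmod_two, sum_singleton, he', hf', hE₁f, hE₂f]
    linear_combination CharTwo.add_self_eq_zero (φ pe) + CharTwo.add_self_eq_zero (φ qe) +
      CharTwo.add_self_eq_zero (φ pf) + CharTwo.add_self_eq_zero (φ qf)
  have hoff : ∀ {E : Finset (EdgeZ d)}, Disjoint E B → ∑ g ∈ E, χ g = 0 := fun hEB =>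
    sum_eq_zero fun g hg => if_neg fun hgX => disjoint_left.mp hEB hg (mem_filter.mp hgX).1
  have hχ := sum_eq_zero_of_isEvenSet χ hsq hbox heven
  simp only [sum_symmDiff_zmod_two, sum_singleton, hoff hE₁B, hoff hE₂B, add_zero] at hχ
  have heX : χ e = 1 := if_pos (mem_filter.mpr ⟨he, .refl⟩)
  by_contra hfX
  have : χ f = 0 := if_neg fun h => hfX (mem_filter.mp h).2
  rw [heX, this] at hχ
  exact one_ne_zero hχ

section Reach

open Function

variable {p q : Vert d} {z₀ : Vert d} {M : ℤ}

lemma update_mem_boxFinset (hp : p ∈ boxFinset d n) {l : Fin d} {t : ℤ}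
    (ht : -(n : ℤ) ≤ t ∧ t ≤ n) : update p l t ∈ boxFinset d n := by
  rw [mem_boxFinset] at hp ⊢
  intro k
  rcases eq_or_ne k l with rfl | hk
  · simpa using ht
  · simpa [hk] using hp k

lemma edgeSnd_update (p : Vert d) (l : Fin d) (t : ℤ) :
    edgeSnd (update p l t, l) = update p l (t + 1) := by
  funext k
  rcases eq_or_ne k l with rfl | hk <;> simp [edgeSnd, unitVec, *]

lemma avoidConn_update_of_le (hp : p ∈ boxFinset d n) {l : Fin d}
    (hB : ∀ s, (update p l s, l) ∉ B) {t : ℤ} (hpt : p l ≤ t) (htn : t ≤ n) :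
    avoidConn d n B p (update p l t) := by
  induction t, hpt using Int.leInduction with
  | base => rw [update_eq_self]; exact .refl
  | succ t hpt ih =>
    have hlow := (mem_boxFinset.mp hp l).1
    refine avoidConn_trans (ih (by omega)) ?_
    rw [← edgeSnd_update]
    refine avoidConn_of_edge
      (mem_boxEdgeFinset.mpr ⟨update_mem_boxFinset hp ⟨by omega, by omega⟩, ?_⟩) (hB t)
    rw [edgeSnd_update]
    exact update_mem_boxFinset hp ⟨by omega, htn⟩

lemma avoidConn_update (hp : p ∈ boxFinset d n) {l : Fin d}
    (hB : ∀ s, (update p l s, l) ∉ B) {t : ℤ} (ht : -(n : ℤ) ≤ t ∧ t ≤ n) :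
    avoidConn d n B p (update p l t) := by
  rcases le_total (p l) t with h | h
  · exact avoidConn_update_of_le hp hB h ht.2
  · have := avoidConn_update_of_le (update_mem_boxFinset (l := l) hp ht) (l := l) (t := p l)
      (by simpa using hB) (by simpa using h) (mem_boxFinset.mp hp l).2
    rw [update_idem, update_eq_self] at this
    exact avoidConn_symm this

lemma exists_far_corner (hz₀ : z₀ ∈ boxFinset d n) (hn : M < n) :
    ∃ q ∈ boxFinset d n, ∀ k, M < |q k - z₀ k| := by
  refine ⟨fun k => if z₀ k ≤ 0 then (n : ℤ) else -(n : ℤ), mem_boxFinset.mpr fun k => ?_,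
    fun k => ?_⟩
  · split_ifs <;> omega
  · have := mem_boxFinset.mp hz₀ k
    dsimp only
    split_ifs <;> rw [lt_abs] <;> omega

lemma notMem_of_far (hBM : ∀ g ∈ B, ∀ k, |g.1 k - z₀ k| ≤ M) {j l : Fin d}
    (hj : M < |p j - z₀ j|) (hjl : j ≠ l) (s : ℤ) :
    (update p l s, l) ∉ B := fun h => by
  have := hBM _ h j
  simp only [update_of_ne hjl] at this
  linarith

lemma avoidConn_of_eq_far (hBM : ∀ g ∈ B, ∀ k, |g.1 k - z₀ k| ≤ M) (hp : p ∈ boxFinset d n)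
    (hq : q ∈ boxFinset d n) {k : Fin d}
    (hk : M < |q k - z₀ k|) (hpq : p k = q k) : avoidConn d n B p q := by
  have hmoves : ∀ s : Finset (Fin d), k ∉ s → avoidConn d n B p (s.piecewise q p) := by
    intro s
    induction s using Finset.induction_on with
    | empty => intro; rw [piecewise_empty]; exact .refl
    | insert l s hl ih =>
      intro hks
      have hks' : k ∉ s := fun h => hks (mem_insert_of_mem h)
      have hkl : k ≠ l := fun h => hks (h ▸ mem_insert_self l s)
      have hbox : s.piecewise q p ∈ boxFinset d n := by
        rw [mem_boxFinset]
        intro i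
        by_cases hi : i ∈ s <;> simp [hi, mem_boxFinset.mp hp i, mem_boxFinset.mp hq i]
      rw [piecewise_insert]
      refine avoidConn_trans (ih hks') (avoidConn_update hbox (notMem_of_far hBM ?_ hkl)
        (mem_boxFinset.mp hq l))
      rwa [piecewise_eq_of_notMem _ _ _ hks', hpq]
  convert hmoves (univ.erase k) (notMem_erase k univ)
  funext l
  rcases eq_or_ne l k with rfl | hl
  · simp [hpq]
  · simp [hl]

lemma avoidConn_of_far (hBM : ∀ g ∈ B, ∀ k, |g.1 k - z₀ k| ≤ M) (hp : p ∈ boxFinset d n)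
    (hq : q ∈ boxFinset d n) {j k : Fin d}
    (hjk : j ≠ k) (hpj : M < |p j - z₀ j|) (hqk : M < |q k - z₀ k|) :
    avoidConn d n B p q :=
  avoidConn_trans
    (avoidConn_update hp (notMem_of_far hBM hpj hjk) (mem_boxFinset.mp hq k))
    (avoidConn_of_eq_far hBM (update_mem_boxFinset hp (mem_boxFinset.mp hq k)) hq hqk
      (update_self ..))

/-- If the box is wider than `M`, both `v` and `w` could otherwise reach a corner of the box
far from `z₀`, moving one coordinate at a time. -/
lemma IsCutset.near_endpoint (hBM : ∀ g ∈ B, ∀ k, |g.1 k - z₀ k| ≤ M) (hd : 2 ≤ d)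
    (hB : IsCutset d n v w B) (hv : v ∈ boxFinset d n) (hw : w ∈ boxFinset d n)
    (hz₀ : z₀ ∈ boxFinset d n) :
    (∀ k, |z₀ k - v k| ≤ 2 * M) ∨ (∀ k, |z₀ k - w k| ≤ 2 * M) := by
  by_cases hn : (n : ℤ) ≤ M
  · left
    intro k
    have := mem_boxFinset.mp hv k
    have := mem_boxFinset.mp hz₀ k
    rw [abs_le]
    constructor <;> linarith
  push Not at hn
  obtain ⟨q, hq, hqfar⟩ := exists_far_corner hz₀ hn
  have hreach : ∀ x ∈ boxFinset d n, (∃ j, M < |x j - z₀ j|) → avoidConn d n B x q := by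
    rintro x hx ⟨j, hj⟩
    have : Nontrivial (Fin d) := Fin.nontrivial_iff_two_le.mpr hd
    obtain ⟨k, hkj⟩ := exists_ne j
    exact avoidConn_of_far hBM hx hq hkj.symm hj (hqfar k)
  have hnear : ∀ x ∈ boxFinset d n, ¬ (∀ k, |x k - z₀ k| ≤ M) → ∀ y ∈ boxFinset d n,
      ¬ (∀ k, |y k - z₀ k| ≤ M) → avoidConn d n B x y := by
    intro x hx hxf y hy hyf
    push Not at hxf hyf
    exact avoidConn_trans (hreach x hx hxf) (avoidConn_symm (hreach y hy hyf))
  by_cases hvn : ∀ k, |v k - z₀ k| ≤ M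
  · left
    intro k
    have := hvn k
    rw [abs_sub_comm]
    linarith [abs_nonneg (v k - z₀ k)]
  by_cases hwn : ∀ k, |w k - z₀ k| ≤ M
  · right
    intro k
    have := hwn k
    rw [abs_sub_comm]
    linarith [abs_nonneg (w k - z₀ k)]
  exact (hB.2 (hnear v hv hvn w hw hwn)).elim

end Reach

/-- A minimal cutset is determined by an edge near `v` or `w` and a short walk of near edges
covering it. -/
lemma IsMinimalCutset.mem_biUnion_chainsFrom (hd : 2 ≤ d) (hB : IsMinimalCutset d n v w B)
    (hv : v ∈ boxFinset d n) (hw : w ∈ boxFinset d n) (hne : B.Nonempty) :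
    B ∈ ((ballFinset v (4 * #B) ∪ ballFinset w (4 * #B)) ×ˢ univ).biUnion
      fun e => (chainsFrom nearEdges e (2 * #B)).image List.toFinset := by
  have hconn : ConnectedOn EdgeNear B := ⟨hne, fun e he f hf =>
    Relation.ReflTransGen.mono (fun _ _ h => ⟨h.1, h.2.1, h.2.2.edgeNear⟩) _ _
      ((hB.connectedOn_sharesSquare hne).2 e he f hf)⟩
  obtain ⟨e, he⟩ := hne
  obtain ⟨l, hle, hl, hlB, hlen⟩ := hconn.exists_isChain_toFinset_eq (fun _ _ h => h.symm) he
  have hBM : ∀ g ∈ B, ∀ k, |g.1 k - e.1 k| ≤ ((2 * #B : ℕ) : ℤ) := fun g hg k => by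
    have := abs_sub_lt_length_of_isChain hl hle (List.mem_toFinset.mp (hlB ▸ hg)) k
    omega
  refine mem_biUnion.mpr ⟨e, mem_product.mpr ⟨?_, mem_univ _⟩,
    mem_image.mpr ⟨l, mem_chainsFrom (fun _ _ h => h.mem_nearEdges) hl hle (by omega), hlB⟩⟩
  rcases hB.1.near_endpoint hBM hd hv hw (mem_boxEdgeFinset.mp (hB.1.1 he)).1 with h | h
  · exact mem_union_left _ (mem_ballFinset.mpr fun k => by
      have := h k; push_cast at this ⊢; linarith)
  · exact mem_union_right _ (mem_ballFinset.mpr fun k => by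
      have := h k; push_cast at this ⊢; linarith)

theorem ncard_minimalCutsets_le (hd : 2 ≤ d) (hv : v ∈ boxFinset d n) (hw : w ∈ boxFinset d n)
    {m : ℕ} (hm : m ≠ 0) :
    {B | IsMinimalCutset d n v w B ∧ #B = m}.ncard ≤
      2 * (8 * m + 1) ^ d * d * (3 ^ d * d + 1) ^ (2 * m) := by
  set A := (ballFinset v (4 * m) ∪ ballFinset w (4 * m)) ×ˢ (univ : Finset (Fin d))
  have hA : #A ≤ 2 * (8 * m + 1) ^ d * d := by
    rw [card_product, card_univ, Fintype.card_fin]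
    gcongr
    refine (card_union_le _ _).trans ?_
    rw [card_ballFinset, card_ballFinset, show 2 * (4 * m) + 1 = 8 * m + 1 by ring]
    omega
  calc {B | IsMinimalCutset d n v w B ∧ #B = m}.ncard
      ≤ #(A.biUnion fun e => (chainsFrom nearEdges e (2 * m)).image List.toFinset) := by
        rw [← Set.ncard_coe_finset]
        refine Set.ncard_le_ncard ?_ (finite_toSet _)
        rintro B ⟨hB, rfl⟩
        exact hB.mem_biUnion_chainsFrom hd hv hw (card_pos.mp (Nat.pos_of_ne_zero hm))
    _ ≤ ∑ _e ∈ A, (3 ^ d * d + 1) ^ (2 * m) := card_biUnion_le.trans (sum_le_sum fun e _ =>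
        card_image_le.trans (card_chainsFrom_le _ (fun g => (card_nearEdges g).le) e _))
    _ ≤ 2 * (8 * m + 1) ^ d * d * (3 ^ d * d + 1) ^ (2 * m) := by
        rw [sum_const, smul_eq_mul]
        gcongr

end Lattice

lemma eight_mul_add_one_le_nine_pow (m : ℕ) : 8 * m + 1 ≤ 9 ^ m := by
  have := one_add_mul_le_pow (show (-2 : ℤ) ≤ 8 by norm_num) m
  norm_num at this
  exact_mod_cast (by linarith : (8 * m + 1 : ℤ) ≤ 9 ^ m)

/-- For `d ≥ 2` the number of minimal cutsets of size `m` separating two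
given vertices of `B_d(n)` is at most `c(d)^m`. -/
theorem count_minimal_cutsets (d : ℕ) (hd : 2 ≤ d) :
    ∃ c : ℕ, ∀ n m : ℕ, ∀ v w : Vert d, v ∈ boxFinset d n → w ∈ boxFinset d n →
      {B : Finset (EdgeZ d) | IsMinimalCutset d n v w B ∧ B.card = m}.ncard ≤ c ^ m := by
  refine ⟨2 * d * 9 ^ d * (3 ^ d * d + 1) ^ 2, fun n m v w hv hw => ?_⟩
  rcases eq_or_ne m 0 with rfl | hm
  · calc _ ≤ ({∅} : Set (Finset (EdgeZ d))).ncard :=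
          Set.ncard_le_ncard fun B hB => Set.mem_singleton_iff.mpr (card_eq_zero.mp hB.2)
      _ = _ := by simp
  calc _ ≤ 2 * (8 * m + 1) ^ d * d * (3 ^ d * d + 1) ^ (2 * m) :=
        ncard_minimalCutsets_le hd hv hw hm
    _ = (2 * d) * (8 * m + 1) ^ d * (3 ^ d * d + 1) ^ (2 * m) := by ring
    _ ≤ (2 * d) ^ m * (9 ^ m) ^ d * (3 ^ d * d + 1) ^ (2 * m) := by
        gcongr
        · exact Nat.le_self_pow hm _
        · exact eight_mul_add_one_le_nine_pow m
    _ = _ := by rw [pow_right_comm 9 m d, pow_mul _ 2 m, ← mul_pow, ← mul_pow]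
end

section
/- For every d ≥ 2 there exist constants p* < 1, a > 0 and c > 0 such that for Bernoulli site percolation on B_d(n) with parameter p > p*, asymptotically almost surely every connected set A of vertices of B_d(n) of size at least c log n contains at least a|A| open sites. -/
open MeasureTheory Filter
open scoped ENNReal Classical

/-!
A connected set of `k` sites is the range of a lattice walk of `2k - 2` steps (each new site is
reached by a detour `x → y → x`), so `B_d(n)` contains at most `|B_d(n)| (2d)^(2k-2)` of them.
If fewer than half of its sites are open, one of its at most `2^k` subsets of size `(k + 1) / 2`
is entirely closed, which has probability at most `2^k (1 - p)^((k+1)/2)`. For `1 - p ≤ (32 d²)⁻²` the union bound over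
all sizes `k ≥ (2d + 1) log n` is `O(|B_d(n)|² n^(-(2d+1))) = O(1/n)`.
-/

open Finset

section ConnectedSets

variable {V σ : Type*}

lemma Relation.ReflTransGen.exists_rel_mem_notMem {r : V → V → Prop} {S : Set V} {a b : V}
    (h : Relation.ReflTransGen r a b) (ha : a ∈ S) (hb : b ∉ S) : ∃ x ∈ S, ∃ y ∉ S, r x y := by
  induction h with
  | refl => exact absurd ha hb
  | @tail c _ _ hcb ih =>
    by_cases hc : c ∈ S
    · exact ⟨c, hc, _, hb, hcb⟩
    · exact ih hc

variable {R : V → V → Prop}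

lemma List.IsChain.exists_scanl_eq (step : V → σ → V) (hstep : ∀ v w, R v w → ∃ s, step v s = w) :
    ∀ {v : V} {l : List V}, (v :: l).IsChain R → ∃ s : List σ, List.scanl step v s = v :: l
  | _, [], _ => ⟨[], rfl⟩
  | v, w :: l, hl => by
    rw [List.isChain_cons_cons] at hl
    obtain ⟨a, rfl⟩ := hstep v w hl.1
    obtain ⟨s, hs⟩ := List.IsChain.exists_scanl_eq step hstep hl.2
    exact ⟨a :: s, by rw [List.scanl_cons, hs]⟩

variable [DecidableEq V] [Std.Symm R]

lemma List.IsChain.exists_insert_of_rel {l : List V} (hl : l.IsChain R)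
    {x y : V} (hx : x ∈ l) (hxy : R x y) :
    ∃ l' : List V, l'.IsChain R ∧ l'.toFinset = insert y l.toFinset ∧
      l'.length = l.length + 2 := by
  obtain ⟨l₁, l₂, rfl⟩ := List.append_of_mem hx
  refine ⟨l₁ ++ x :: y :: x :: l₂, ?_, ?_, by simp; omega⟩
  · rw [List.isChain_split, List.isChain_cons_cons, List.isChain_cons_cons] at *
    exact ⟨hl.1, hxy, symm hxy, hl.2⟩
  · ext z
    simp only [List.toFinset_append, List.toFinset_cons, Finset.mem_union, Finset.mem_insert,
      List.mem_toFinset]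
    tauto

lemma ConnectedOn.exists_isChain_toFinset_eq_s15 {A : Finset V}
    (hA : ConnectedOn R A) :
    ∃ l : List V, l.IsChain R ∧ l.toFinset = A ∧ l.length = 2 * #A - 1 := by
  suffices h : ∀ (m : ℕ) (l : List V), l ≠ [] → l.IsChain R → l.toFinset ⊆ A →
      #(A \ l.toFinset) = m → l.length = 2 * #l.toFinset - 1 →
      ∃ l' : List V, l'.IsChain R ∧ l'.toFinset = A ∧ l'.length = 2 * #A - 1 by
    obtain ⟨v, hv⟩ := hA.1
    exact h _ [v] (by simp) (List.isChain_singleton v) (by simpa using hv) rfl (by simp)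
  intro m
  induction m with
  | zero =>
    intro l _ hl hlA hm hlen
    have hAl : l.toFinset = A := hlA.antisymm (Finset.sdiff_eq_empty_iff_subset.mp
      (Finset.card_eq_zero.mp hm))
    exact ⟨l, hl, hAl, hAl ▸ hlen⟩
  | succ m ih =>
    intro l hne hl hlA hm hlen
    obtain ⟨w, hw⟩ : (A \ l.toFinset).Nonempty := Finset.card_pos.mp (by omega)
    obtain ⟨v, hv⟩ : l.toFinset.Nonempty := by simpa [List.toFinset_nonempty_iff] using hne
    obtain ⟨x, hxl, y, hyl, hxA, hyA, hxy⟩ :=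
      (hA.2 v (hlA hv) w (Finset.mem_sdiff.mp hw).1).exists_rel_mem_notMem
        (S := {z | z ∈ l.toFinset}) hv (Finset.mem_sdiff.mp hw).2
    obtain ⟨l', hl', hl'set, hl'len⟩ := hl.exists_insert_of_rel (List.mem_toFinset.mp hxl) hxy
    have hvl : 0 < #l.toFinset := Finset.card_pos.mpr ⟨v, hv⟩
    refine ih l' (List.ne_nil_of_length_pos (by omega)) hl' ?_ ?_ ?_
    · rw [hl'set]; exact Finset.insert_subset hyA hlA
    · rw [hl'set, Finset.sdiff_insert, Finset.card_erase_of_mem (Finset.mem_sdiff.mpr ⟨hyA, hyl⟩),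
        hm, Nat.add_sub_cancel]
    · rw [hl'set, Finset.card_insert_of_notMem hyl]; omega

/-- A connected set of size `k` is the range of a walk of `2k - 2` steps from one of its
vertices, each step encoded by an element of `σ`. -/
lemma card_filter_connectedOn_le [Fintype σ] (step : V → σ → V)
    (hstep : ∀ v w, R v w → ∃ s, step v s = w) (B : Finset V) (k : ℕ) :
    #{A ∈ B.powerset | ConnectedOn R A ∧ #A = k} ≤ #B * Fintype.card σ ^ (2 * k - 2) := by
  let walkRange : V × List.Vector σ (2 * k - 2) → Finset V :=
    fun vs => (List.scanl step vs.1 vs.2.toList).toFinset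
  calc #{A ∈ B.powerset | ConnectedOn R A ∧ #A = k}
      ≤ #((B ×ˢ (univ : Finset (List.Vector σ (2 * k - 2)))).image walkRange) := by
        refine Finset.card_le_card fun A hA => ?_
        simp only [Finset.mem_filter, Finset.mem_powerset] at hA
        obtain ⟨hAB, hA, hAk⟩ := hA
        obtain ⟨l, hl, hlA, hlen⟩ := hA.exists_isChain_toFinset_eq_s15
        obtain ⟨v, t, rfl⟩ := List.exists_cons_of_length_pos
          (by have := Finset.card_pos.mpr hA.1; omega : 0 < l.length)
        obtain ⟨s, hs⟩ := hl.exists_scanl_eq step hstep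
        have hslen : s.length = 2 * k - 2 := by
          have := congrArg List.length hs
          simp only [List.length_scanl, List.length_cons] at this hlen
          omega
        refine Finset.mem_image.mpr ⟨(v, ⟨s, hslen⟩), ?_, ?_⟩
        · exact Finset.mem_product.mpr ⟨hAB (hlA ▸ List.mem_toFinset.mpr (List.mem_cons_self)),
            Finset.mem_univ _⟩
        · simp only [walkRange, List.Vector.toList_mk, hs, hlA]
    _ ≤ #(B ×ˢ (univ : Finset (List.Vector σ (2 * k - 2)))) := Finset.card_image_le
    _ = #B * Fintype.card σ ^ (2 * k - 2) := by
        rw [Finset.card_product, Finset.card_univ, card_vector]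

end ConnectedSets

section Lattice

variable {d : ℕ}

instance : Std.Symm (@latAdj d) :=
  ⟨fun v w h => by simpa only [latAdj, l1dist, abs_sub_comm] using h⟩

def latticeStep (v : Vert d) (s : Fin d × Bool) : Vert d :=
  if s.2 then v + unitVec d s.1 else v - unitVec d s.1

lemma exists_latticeStep_eq_of_latAdj {v w : Vert d} (h : latAdj v w) :
    ∃ s, latticeStep v s = w := by
  have hsum : ∑ j, |v j - w j| = 1 := h
  obtain ⟨i, hi⟩ : ∃ i, v i ≠ w i := by
    by_contra! hvw
    simp [hvw] at hsum
  have hle : |v i - w i| ≤ 1 :=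
    hsum ▸ Finset.single_le_sum (fun j _ => abs_nonneg (v j - w j)) (Finset.mem_univ i)
  have hrest : ∀ j ≠ i, v j = w j := by
    have hzero : ∑ j ∈ univ.erase i, |v j - w j| = 0 := by
      have := Finset.add_sum_erase univ (fun j => |v j - w j|) (Finset.mem_univ i)
      have : 1 ≤ |v i - w i| := Int.one_le_abs (sub_ne_zero.mpr hi)
      linarith
    intro j hj
    have := (Finset.sum_eq_zero_iff_of_nonneg fun j _ => abs_nonneg (v j - w j)).mp hzero j
      (Finset.mem_erase.mpr ⟨hj, Finset.mem_univ j⟩)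
    rwa [abs_eq_zero, sub_eq_zero] at this
  refine ⟨(i, decide (v i < w i)), funext fun j => ?_⟩
  by_cases hj : j = i
  · subst hj
    rcases lt_or_gt_of_ne hi with hlt | hgt
    · simp [latticeStep, unitVec, hlt]; rw [abs_le] at hle; omega
    · simp [latticeStep, unitVec, hgt.not_gt]; rw [abs_le] at hle; omega
  · cases decide (v i < w i) <;> simp [latticeStep, unitVec, hj, hrest j hj]

lemma card_filter_latAdj_connectedOn_le (B : Finset (Vert d)) (k : ℕ) :
    #{A ∈ B.powerset | ConnectedOn latAdj A ∧ #A = k} ≤ #B * (2 * d) ^ (2 * k - 2) := by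
  simpa [mul_comm] using card_filter_connectedOn_le latticeStep
    (fun _ _ => exists_latticeStep_eq_of_latAdj) B k

end Lattice

lemma quarter_pow_le_exp_neg (k : ℕ) : (1 / 4 : ℝ) ^ k ≤ Real.exp (-k) := by
  have h : (1 / 4 : ℝ) ≤ Real.exp (-1) := by
    rw [Real.exp_neg, one_div]
    exact inv_anti₀ (Real.exp_pos 1) (by linarith [Real.exp_one_lt_d9])
  calc (1 / 4 : ℝ) ^ k ≤ Real.exp (-1) ^ k := by gcongr
    _ = Real.exp (-k) := by rw [← Real.exp_nat_mul]; ring_nf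

section Counting

variable {d : ℕ} {q : ℝ}

/-- `ε = 1 / (32 d²)` is chosen so that `(2d)² · 2 · ε = 1/4`: the bound `q ^ ((k + 1) / 2) ≤ ε ^ k`
beats the `(2d) ^ (2k - 2) · 2 ^ k` choices of a connected set and of its closed sites. -/
lemma connected_count_mul_le_quarter_pow (hd : 0 < d) (hq0 : 0 ≤ q)
    (hq : q ≤ ((32 * d ^ 2 : ℝ)⁻¹) ^ 2) (k : ℕ) :
    (2 * d : ℝ) ^ (2 * k - 2) * (2 ^ k * q ^ ((k + 1) / 2)) ≤ (1 / 4) ^ k := by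
  set ε := (32 * d ^ 2 : ℝ)⁻¹
  have hd1 : (1 : ℝ) ≤ d := by exact_mod_cast hd
  have hε0 : 0 ≤ ε := by positivity
  have hε1 : ε ≤ 1 := inv_le_one_of_one_le₀ (by nlinarith)
  have hqk : q ^ ((k + 1) / 2) ≤ ε ^ k :=
    calc q ^ ((k + 1) / 2) ≤ (ε ^ 2) ^ ((k + 1) / 2) := by gcongr
      _ = ε ^ (2 * ((k + 1) / 2)) := by rw [pow_mul]
      _ ≤ ε ^ k := pow_le_pow_of_le_one hε0 hε1 (by omega)
  have hdk : (2 * d : ℝ) ^ (2 * k - 2) ≤ (4 * d ^ 2) ^ k :=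
    calc (2 * d : ℝ) ^ (2 * k - 2) ≤ (2 * d) ^ (2 * k) := pow_le_pow_right₀ (by linarith) (by omega)
      _ = (4 * d ^ 2) ^ k := by rw [pow_mul]; ring
  calc (2 * d : ℝ) ^ (2 * k - 2) * (2 ^ k * q ^ ((k + 1) / 2))
      ≤ (4 * d ^ 2) ^ k * (2 ^ k * ε ^ k) := by gcongr
    _ = (1 / 4) ^ k := by
        rw [← mul_pow, ← mul_pow]
        congr 1
        simp only [ε]
        field_simp
        ring

lemma sum_connectedOn_latAdj_le (hd : 0 < d) (hq0 : 0 ≤ q) (hq : q ≤ ((32 * d ^ 2 : ℝ)⁻¹) ^ 2)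
    (B : Finset (Vert d)) (x : ℝ) :
    ∑ A ∈ B.powerset with ConnectedOn latAdj A ∧ x ≤ #A, (2 : ℝ) ^ #A * q ^ ((#A + 1) / 2)
      ≤ (#B + 1) * #B * Real.exp (-x) := by
  set 𝒜 := {A ∈ B.powerset | ConnectedOn latAdj A ∧ x ≤ #A}
  set f : ℕ → ℝ := fun k => 2 ^ k * q ^ ((k + 1) / 2)
  set sizes := (range (#B + 1)).filter fun k : ℕ => x ≤ k
  have hmaps : ∀ A ∈ 𝒜, #A ∈ sizes := fun A hA => by
    simp only [𝒜, Finset.mem_filter, Finset.mem_powerset] at hA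
    exact Finset.mem_filter.mpr ⟨Finset.mem_range.mpr (Nat.lt_succ_of_le (card_le_card hA.1)),
      hA.2.2⟩
  calc ∑ A ∈ 𝒜, f #A = ∑ k ∈ sizes, ∑ A ∈ 𝒜 with #A = k, f #A :=
        (Finset.sum_fiberwise_of_maps_to hmaps _).symm
    _ ≤ ∑ k ∈ sizes, #B * Real.exp (-x) := by
        refine Finset.sum_le_sum fun k hk => ?_
        have hxk : x ≤ k := (Finset.mem_filter.mp hk).2
        have hsub : {A ∈ 𝒜 | #A = k} ⊆ {A ∈ B.powerset | ConnectedOn latAdj A ∧ #A = k} :=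
          fun A hA => by simp only [𝒜, Finset.mem_filter] at hA ⊢; tauto
        calc ∑ A ∈ 𝒜 with #A = k, f #A = #{A ∈ 𝒜 | #A = k} * f k := by
              rw [Finset.sum_congr rfl fun A hA => by rw [(Finset.mem_filter.mp hA).2],
                Finset.sum_const, nsmul_eq_mul]
          _ ≤ (#B * (2 * d) ^ (2 * k - 2) : ℕ) * f k := by
              gcongr
              exact (card_le_card hsub).trans (card_filter_latAdj_connectedOn_le B k)
          _ = #B * ((2 * d : ℝ) ^ (2 * k - 2) * f k) := by push_cast; ring
          _ ≤ #B * Real.exp (-x) := by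
              gcongr
              calc _ ≤ (1 / 4 : ℝ) ^ k := connected_count_mul_le_quarter_pow hd hq0 hq k
                _ ≤ Real.exp (-k) := quarter_pow_le_exp_neg k
                _ ≤ Real.exp (-x) := by gcongr
    _ ≤ (#B + 1) * #B * Real.exp (-x) := by
        rw [Finset.sum_const, nsmul_eq_mul, mul_assoc]
        gcongr
        exact_mod_cast (card_filter_le _ _).trans (card_range _).le

end Counting

section SitePercolation

variable {d n : ℕ} {p : ℝ}

lemma bern_singleton_false (hp0 : 0 ≤ p) (hp1 : p ≤ 1) :
    bern p {false} = ENNReal.ofReal (1 - p) := by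
  rw [bern, PMF.toMeasure_apply_singleton _ _ (measurableSet_singleton _)]
  change ((1 - min p.toNNReal 1 : NNReal) : ℝ≥0∞) = _
  rw [min_eq_left (Real.toNNReal_le_one.mpr hp1), ENNReal.coe_sub, ENNReal.coe_one,
    ENNReal.ofReal_sub _ hp0, ENNReal.ofReal_one]
  rfl

lemma measurable_extendByFalse :
    Measurable fun (η : {v // v ∈ boxFinset d n} → Bool) (v : Vert d) =>
      if h : v ∈ boxFinset d n then η ⟨v, h⟩ else false := by
  refine measurable_pi_lambda _ fun v => ?_
  split_ifs
  exacts [measurable_pi_apply _, measurable_const]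

instance : IsProbabilityMeasure (siteMeasure d n p) :=
  Measure.isProbabilityMeasure_map measurable_extendByFalse.aemeasurable

lemma siteMeasure_forall_false (hp0 : 0 ≤ p) (hp1 : p ≤ 1) {S : Finset (Vert d)}
    (hS : S ⊆ boxFinset d n) :
    siteMeasure d n p {η | ∀ v ∈ S, η v = false} = ENNReal.ofReal (1 - p) ^ #S := by
  have hmeas : MeasurableSet {η : Vert d → Bool | ∀ v ∈ S, η v = false} := by
    simp only [Set.ofPred_forall]
    exact Finset.measurableSet_biInter S fun v _ =>
      measurableSet_eq_fun (measurable_pi_apply v) measurable_const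
  have hpre : (fun (η : {v // v ∈ boxFinset d n} → Bool) (v : Vert d) =>
      if h : v ∈ boxFinset d n then η ⟨v, h⟩ else false) ⁻¹' {η | ∀ v ∈ S, η v = false}
      = Set.univ.pi fun j : {v // v ∈ boxFinset d n} =>
          if (j : Vert d) ∈ S then {false} else Set.univ := by
    ext η
    simp only [Set.mem_preimage, Set.mem_ofPred_eq, Set.mem_pi, Set.mem_univ, true_implies]
    constructor
    · intro h j
      split_ifs with hj
      · simpa [j.2] using h j hj
      · trivial
    · intro h v hv
      simpa [hS hv, hv] using h ⟨v, hS hv⟩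
  rw [siteMeasure, Measure.map_apply measurable_extendByFalse hmeas, hpre, Measure.pi_pi]
  simp only [apply_ite (bern p), bern_singleton_false hp0 hp1, measure_univ]
  rw [Finset.prod_coe_sort (boxFinset d n) fun v => if v ∈ S then ENNReal.ofReal (1 - p) else 1,
    Finset.prod_ite_mem, Finset.inter_eq_right.mpr hS, Finset.prod_const]

lemma siteMeasure_few_open_le (hp0 : 0 ≤ p) (hp1 : p ≤ 1) {A : Finset (Vert d)}
    (hA : A ⊆ boxFinset d n) :
    siteMeasure d n p {η | (#{v ∈ A | η v = true} : ℝ) < 1 / 2 * #A}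
      ≤ ENNReal.ofReal (2 ^ #A * (1 - p) ^ ((#A + 1) / 2)) := by
  set t := (#A + 1) / 2
  have hsub : {η : Vert d → Bool | (#{v ∈ A | η v = true} : ℝ) < 1 / 2 * #A}
      ⊆ ⋃ S ∈ A.powersetCard t, {η | ∀ v ∈ S, η v = false} := by
    rintro η (hη : (#{v ∈ A | η v = true} : ℝ) < 1 / 2 * #A)
    have hsplit := Finset.card_filter_add_card_filter_not (s := A) (fun v => η v = true)
    simp only [Bool.not_eq_true] at hsplit
    have hopen : 2 * #{v ∈ A | η v = true} < #A := by
      have : (2 * #{v ∈ A | η v = true} : ℝ) < #A := by linarith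
      exact_mod_cast this
    obtain ⟨S, hSC, hSt⟩ := Finset.exists_subset_card_eq (s := {v ∈ A | η v = false}) (n := t)
      (by omega)
    simp only [Set.mem_iUnion]
    exact ⟨S, Finset.mem_powersetCard.mpr ⟨hSC.trans (Finset.filter_subset _ _), hSt⟩,
      fun v hv => (Finset.mem_filter.mp (hSC hv)).2⟩
  calc siteMeasure d n p {η | (#{v ∈ A | η v = true} : ℝ) < 1 / 2 * #A}
      ≤ ∑ S ∈ A.powersetCard t, siteMeasure d n p {η | ∀ v ∈ S, η v = false} :=
        (measure_mono hsub).trans (measure_biUnion_finset_le _ _)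
    _ = (A.card.choose t) * ENNReal.ofReal (1 - p) ^ t := by
        rw [Finset.sum_congr rfl fun S hS => by
          rw [siteMeasure_forall_false hp0 hp1 ((Finset.mem_powersetCard.mp hS).1.trans hA),
            (Finset.mem_powersetCard.mp hS).2],
          Finset.sum_const, nsmul_eq_mul, Finset.card_powersetCard]
    _ ≤ 2 ^ #A * ENNReal.ofReal (1 - p) ^ t := by
        gcongr
        exact_mod_cast Nat.choose_le_two_pow _ _
    _ = ENNReal.ofReal (2 ^ #A * (1 - p) ^ t) := by
        rw [ENNReal.ofReal_mul (by positivity), ENNReal.ofReal_pow (sub_nonneg.mpr hp1),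
          ENNReal.ofReal_pow zero_le_two, ENNReal.ofReal_ofNat]

end SitePercolation

lemma tendsto_measure_nhds_one_of_compl_subset {ι Ω : Type*} [MeasurableSpace Ω]
    {μ : ι → Measure Ω} [∀ i, IsProbabilityMeasure (μ i)] {l : Filter ι} {s t : ι → Set Ω}
    (hst : ∀ i, (s i)ᶜ ⊆ t i) (ht : Tendsto (fun i => μ i (t i)) l (nhds 0)) :
    Tendsto (fun i => μ i (s i)) l (nhds 1) := by
  have hlower : Tendsto (fun i => 1 - μ i (t i)) l (nhds 1) := by
    simpa using ENNReal.Tendsto.sub tendsto_const_nhds ht (Or.inl ENNReal.one_ne_top)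
  refine tendsto_of_tendsto_of_tendsto_of_le_of_le hlower tendsto_const_nhds (fun i => ?_)
    (fun i => prob_le_one)
  rw [tsub_le_iff_right]
  calc 1 = μ i Set.univ := measure_univ.symm
    _ ≤ μ i (s i) + μ i (s i)ᶜ := measure_univ_le_add_compl _
    _ ≤ μ i (s i) + μ i (t i) := by gcongr; exact hst i

lemma card_boxFinset (d n : ℕ) : #(boxFinset d n) = (2 * n + 1) ^ d := by
  rw [boxFinset, Fintype.card_piFinset, Int.card_Icc, Finset.prod_const, Finset.card_univ,
    Fintype.card_fin]
  congr 1
  omega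

def sparseConnectedEvent (d n : ℕ) (x : ℝ) : Set (Vert d → Bool) :=
  {η | ∃ A ⊆ boxFinset d n, ConnectedOn latAdj A ∧ x ≤ #A ∧
    (#{v ∈ A | η v = true} : ℝ) < 1 / 2 * #A}

lemma siteMeasure_sparseConnectedEvent_le {d n : ℕ} {p : ℝ} (hd : 0 < d) (hp0 : 0 ≤ p)
    (hp1 : p ≤ 1) (hp : 1 - p ≤ ((32 * d ^ 2 : ℝ)⁻¹) ^ 2) (x : ℝ) :
    siteMeasure d n p (sparseConnectedEvent d n x)
      ≤ ENNReal.ofReal ((#(boxFinset d n) + 1) * #(boxFinset d n) * Real.exp (-x)) := by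
  set 𝒜 := {A ∈ (boxFinset d n).powerset | ConnectedOn latAdj A ∧ x ≤ #A}
  have hsub : sparseConnectedEvent d n x
      ⊆ ⋃ A ∈ 𝒜, {η | (#{v ∈ A | η v = true} : ℝ) < 1 / 2 * #A} := by
    rintro η ⟨A, hA, hAconn, hAx, hAsparse⟩
    simp only [Set.mem_iUnion]
    exact ⟨A, Finset.mem_filter.mpr ⟨Finset.mem_powerset.mpr hA, hAconn, hAx⟩, hAsparse⟩
  calc _ ≤ ∑ A ∈ 𝒜, siteMeasure d n p {η | (#{v ∈ A | η v = true} : ℝ) < 1 / 2 * #A} :=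
        (measure_mono hsub).trans (measure_biUnion_finset_le _ _)
    _ ≤ ∑ A ∈ 𝒜, ENNReal.ofReal (2 ^ #A * (1 - p) ^ ((#A + 1) / 2)) :=
        Finset.sum_le_sum fun A hA => siteMeasure_few_open_le hp0 hp1
          (Finset.mem_powerset.mp (Finset.mem_filter.mp hA).1)
    _ = ENNReal.ofReal (∑ A ∈ 𝒜, 2 ^ #A * (1 - p) ^ ((#A + 1) / 2)) :=
        (ENNReal.ofReal_sum_of_nonneg fun A _ => by
          have := sub_nonneg.mpr hp1
          positivity).symm
    _ ≤ _ := ENNReal.ofReal_le_ofReal (sum_connectedOn_latAdj_le hd (sub_nonneg.mpr hp1) hp _ x)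

lemma tendsto_card_boxFinset_sq_mul_exp (d : ℕ) :
    Tendsto (fun n : ℕ => ((#(boxFinset d n) : ℝ) + 1) * #(boxFinset d n) *
      Real.exp (-((2 * d + 1) * Real.log n))) atTop (nhds 0) := by
  refine squeeze_zero' (Eventually.of_forall fun n => by positivity) ?_
    (tendsto_const_div_atTop_nhds_zero_nat (2 * 9 ^ d))
  filter_upwards [eventually_ge_atTop 1] with n hn
  have hn : (1 : ℝ) ≤ n := by exact_mod_cast hn
  have hexp : Real.exp (-((2 * d + 1) * Real.log n)) = ((n : ℝ) ^ (2 * d + 1))⁻¹ := by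
    rw [← Real.exp_log (by positivity : (0 : ℝ) < n ^ (2 * d + 1)), ← Real.exp_neg,
      Real.log_pow]
    push_cast
    ring_nf
  have hbox : ((#(boxFinset d n) : ℝ) + 1) * #(boxFinset d n) ≤ 2 * 9 ^ d * n ^ (2 * d) := by
    have h3n : (#(boxFinset d n) : ℝ) ≤ (3 * n) ^ d := by
      rw [card_boxFinset]; push_cast; gcongr; linarith
    have h1 : (1 : ℝ) ≤ (3 * n) ^ d := one_le_pow₀ (by linarith)
    calc ((#(boxFinset d n) : ℝ) + 1) * #(boxFinset d n) ≤ (2 * (3 * n) ^ d) * (3 * n) ^ d := by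
          gcongr; linarith
      _ = 2 * 9 ^ d * n ^ (2 * d) := by
          rw [show (9 : ℝ) = 3 ^ 2 by norm_num, ← pow_mul, mul_pow]; ring
  rw [hexp, pow_succ, ← div_eq_mul_inv, div_le_div_iff₀ (by positivity) (by positivity)]
  calc _ ≤ 2 * 9 ^ d * (n : ℝ) ^ (2 * d) * n := by gcongr
    _ = _ := by ring

/-- For `d ≥ 2` there are `p* < 1`, `a > 0`, `c > 0` such that for site
percolation with parameter `p > p*`, a.a.s. every connected set `A` of vertices of `B_d(n)`
with `|A| ≥ c log n` contains at least `a |A|` open sites. -/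
theorem connected_sets_open_sites (d : ℕ) (hd : 2 ≤ d) :
    ∃ pstar a c : ℝ, pstar < 1 ∧ 0 < a ∧ 0 < c ∧
      ∀ p : ℝ, pstar < p → p ≤ 1 →
        Tendsto (fun n : ℕ => siteMeasure d n p
            {η | ∀ A : Finset (Vert d), A ⊆ boxFinset d n → ConnectedOn latAdj A →
              c * Real.log n ≤ (A.card : ℝ) →
              a * (A.card : ℝ) ≤ ((A.filter fun v => η v = true).card : ℝ)})
          atTop (nhds 1) := by
  have hd0 : 0 < d := by omega
  have hε : (0 : ℝ) < ((32 * d ^ 2 : ℝ)⁻¹) ^ 2 := by positivity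
  have hε1 : ((32 * d ^ 2 : ℝ)⁻¹) ^ 2 < 1 := by
    have : (1 : ℝ) ≤ d := by exact_mod_cast hd0
    exact pow_lt_one₀ (by positivity) (inv_lt_one_of_one_lt₀ (by nlinarith)) two_ne_zero
  refine ⟨1 - ((32 * d ^ 2 : ℝ)⁻¹) ^ 2, 1 / 2, 2 * d + 1, by linarith, by norm_num, by positivity,
    fun p hp hp1 => tendsto_measure_nhds_one_of_compl_subset
      (t := fun n => sparseConnectedEvent d n ((2 * d + 1) * Real.log n)) (fun n η hη => ?_) ?_⟩
  · simpa [sparseConnectedEvent] using hη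
  · have hbound := fun n : ℕ => siteMeasure_sparseConnectedEvent_le (n := n) hd0
      (by linarith) hp1 (by linarith) ((2 * d + 1) * Real.log n)
    have hlim := ENNReal.tendsto_ofReal (tendsto_card_boxFinset_sq_mul_exp d)
    rw [ENNReal.ofReal_zero] at hlim
    exact tendsto_of_tendsto_of_tendsto_of_le_of_le tendsto_const_nhds hlim
      (fun _ => zero_le) hbound
end
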